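/- arXiv:2010.03394 — 5 statements merged into one kernel-verified Lean document; each statement's English description precedes it below -/
import Mathlib

section
/- Let 𝒢 = (G_n,‖·‖_n)_{n∈ℕ} be a family of metric groups with sup_n sup_{g∈G_n} ‖g‖_n < ∞, and 𝒰 a nonprincipal ultrafilter on ℕ. If 𝒢*_met = ⋃_{m∈ℕ} X_m, where each X_m is a metrically internal subset of 𝒢*_met, then there is N ∈ ℕ such that 𝒢*_met = (X_0 ∪ … ∪ X_N)², i.e., every element of 𝒢*_met is a product of two elements of X_0 ∪ … ∪ X_N. -/
open Filter Set Pointwise ENNReal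

/-- `CN N g` : the set of all products of at most `N` conjugates of `g` and `g⁻¹`. -/
def CN {H : Type*} [Group H] (N : ℕ) (g : H) : Set H :=
  ⋃ m ≤ N, ({x | IsConj g x} ∪ {x | IsConj g⁻¹ x}) ^ m

/-- A family of groups equipped with conjugation-invariant pseudo-norms with values in `[0,∞]`. -/
structure PMFamily where
  G : ℕ → Type
  grp : ∀ n, Group (G n)
  ν : ∀ n, G n → ℝ≥0∞
  norm_one : ∀ n, ν n 1 = 0
  norm_mul : ∀ n (g h : G n), ν n (g * h) ≤ ν n g + ν n h
  norm_inv : ∀ n (g : G n), ν n g⁻¹ = ν n g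
  norm_conj : ∀ n (g h : G n), ν n (h * g * h⁻¹) = ν n g

attribute [instance] PMFamily.grp

namespace PMFamily

variable (𝒢 : PMFamily) (U : Ultrafilter ℕ)

/-- The subgroup of infinitesimal sequences. -/
def E : Subgroup (∀ n, 𝒢.G n) where
  carrier := {g | ∀ ε : ℝ≥0∞, 0 < ε → {n | 𝒢.ν n (g n) < ε} ∈ U}
  one_mem' := by
    intro ε hε
    have h : {n | 𝒢.ν n ((1 : ∀ n, 𝒢.G n) n) < ε} = Set.univ := by
      ext n; simpa [𝒢.norm_one n] using hε
    show {n | 𝒢.ν n ((1 : ∀ n, 𝒢.G n) n) < ε} ∈ U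
    rw [h]
    exact Filter.univ_mem
  mul_mem' := by
    intro g h hg hh ε hε
    have h2 : (0 : ℝ≥0∞) < ε / 2 := ENNReal.half_pos hε.ne'
    have key : {n | 𝒢.ν n (g n) < ε / 2} ∩ {n | 𝒢.ν n (h n) < ε / 2} ⊆
        {n | 𝒢.ν n ((g * h) n) < ε} := by
      rintro n ⟨h1, h1'⟩
      simp only [Set.mem_setOf_eq] at h1 h1' ⊢
      calc 𝒢.ν n ((g * h) n) = 𝒢.ν n (g n * h n) := rfl
        _ ≤ 𝒢.ν n (g n) + 𝒢.ν n (h n) := 𝒢.norm_mul n _ _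
        _ < ε / 2 + ε / 2 := ENNReal.add_lt_add h1 h1'
        _ = ε := ENNReal.add_halves ε
    exact Filter.mem_of_superset (Filter.inter_mem (hg _ h2) (hh _ h2)) key
  inv_mem' := by
    intro g hg ε hε
    have h : {n | 𝒢.ν n (g⁻¹ n) < ε} = {n | 𝒢.ν n (g n) < ε} := by
      ext n; simp only [Set.mem_setOf_eq, Pi.inv_apply, 𝒢.norm_inv n]
    show {n | 𝒢.ν n (g⁻¹ n) < ε} ∈ U
    rw [h]
    exact hg ε hε

theorem mem_E {g : ∀ n, 𝒢.G n} :
    g ∈ 𝒢.E U ↔ ∀ ε : ℝ≥0∞, 0 < ε → {n | 𝒢.ν n (g n) < ε} ∈ U := Iff.rfl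

instance normal_E : (𝒢.E U).Normal := by
  constructor
  intro g hg h
  rw [mem_E] at hg ⊢
  intro ε hε
  have heq : {n | 𝒢.ν n ((h * g * h⁻¹) n) < ε} = {n | 𝒢.ν n (g n) < ε} := by
    ext n
    simp only [Set.mem_setOf_eq, Pi.mul_apply, Pi.inv_apply, 𝒢.norm_conj n]
  rw [heq]
  exact hg ε hε

/-- The metric ultraproduct. -/
abbrev Q := (∀ n, 𝒢.G n) ⧸ 𝒢.E U

/-- The limit of the norms along the ultrafilter, on the product group. -/
noncomputable def pnorm (g : ∀ n, 𝒢.G n) : ℝ≥0∞ :=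
  Filter.limsup (fun n => 𝒢.ν n (g n)) U

/-- The induced norm on the metric ultraproduct. -/
noncomputable def qnorm (x : 𝒢.Q U) : ℝ≥0∞ := 𝒢.pnorm U (Quotient.out x)

/-- The open ball of radius `ε` around the identity in the metric ultraproduct. -/
def ball (ε : ℝ≥0∞) : Set (𝒢.Q U) := {x | 𝒢.qnorm U x < ε}

/-- Metrically internal subsets of the metric ultraproduct. -/
def internalSet (Xn : ∀ n, Set (𝒢.G n)) : Set (𝒢.Q U) :=
  (QuotientGroup.mk : (∀ n, 𝒢.G n) → 𝒢.Q U) '' {g | ∀ n, g n ∈ Xn n}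

/-- The finitary subgroup of the metric ultraproduct: classes of uniformly bounded
sequences (equivalently, elements of finite norm). -/
def finSubgroup : Subgroup (𝒢.Q U) where
  carrier := {x | ∃ g : ∀ n, 𝒢.G n, QuotientGroup.mk g = x ∧
    ∃ C : ℝ≥0∞, C ≠ ⊤ ∧ ∀ n, 𝒢.ν n (g n) ≤ C}
  one_mem' := ⟨1, rfl, 0, by simp, fun n => by simp [𝒢.norm_one n]⟩
  mul_mem' := by
    rintro x y ⟨g, rfl, C, hC, hg⟩ ⟨h, rfl, D, hD, hh⟩
    refine ⟨g * h, rfl, C + D, ENNReal.add_ne_top.mpr ⟨hC, hD⟩, fun n => ?_⟩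
    exact le_trans (𝒢.norm_mul n (g n) (h n)) (add_le_add (hg n) (hh n))
  inv_mem' := by
    rintro x ⟨g, rfl, C, hC, hg⟩
    exact ⟨g⁻¹, rfl, C, hC, fun n => by rw [Pi.inv_apply, 𝒢.norm_inv n]; exact hg n⟩

end PMFamily
namespace MetUP

open Filter Set ENNReal

variable (𝒢 : PMFamily) (U : Ultrafilter ℕ)

lemma mem_ge (hU : (U : Filter ℕ) ≤ Filter.cofinite) (K : ℕ) : {n : ℕ | K ≤ n} ∈ U := by
  apply hU
  have : {n : ℕ | K ≤ n}ᶜ = {n | n < K} := by ext n; simp [not_le]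
  simp only [Filter.mem_cofinite, this]
  exact Set.finite_lt_nat K

lemma pigeon (N : ℕ) (A : ℕ → Set ℕ) (h : {n | ∃ m ≤ N, n ∈ A m} ∈ U) :
    ∃ m ≤ N, A m ∈ U := by
  induction N with
  | zero =>
    refine ⟨0, le_rfl, ?_⟩
    have he : {n | ∃ m ≤ 0, n ∈ A m} = A 0 := by ext n; simp
    rwa [he] at h
  | succ N ih =>
    have hsplit : {n | ∃ m ≤ N + 1, n ∈ A m} = {n | ∃ m ≤ N, n ∈ A m} ∪ A (N + 1) := by
      ext n
      simp only [Set.mem_setOf_eq, Set.mem_union]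
      constructor
      · rintro ⟨m, hm, hn⟩
        rcases eq_or_lt_of_le hm with rfl | hlt
        · exact Or.inr hn
        · exact Or.inl ⟨m, Nat.lt_succ_iff.mp hlt, hn⟩
      · rintro (⟨m, hm, hn⟩ | hn)
        · exact ⟨m, hm.trans (Nat.le_succ N), hn⟩
        · exact ⟨N + 1, le_rfl, hn⟩
    rw [hsplit] at h
    rcases Ultrafilter.union_mem_iff.mp h with h | h
    · obtain ⟨m, hm, hmem⟩ := ih h
      exact ⟨m, hm.trans (Nat.le_succ N), hmem⟩
    · exact ⟨N + 1, le_rfl, h⟩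

lemma mem_internal {Xn : ∀ n, Set (𝒢.G n)} {x : 𝒢.Q U} :
    x ∈ 𝒢.internalSet U Xn ↔
      ∃ g : ∀ n, 𝒢.G n, (∀ n, g n ∈ Xn n) ∧ (QuotientGroup.mk g : 𝒢.Q U) = x :=
  Set.mem_image _ _ _

/-- Internal sets (with all fibers nonempty) are "uniformly separated" from points
outside of them. -/
lemma gap (hU : (U : Filter ℕ) ≤ Filter.cofinite)
    (Z : ∀ n, Set (𝒢.G n)) (hZ : ∀ n, (Z n).Nonempty) (g : ∀ n, 𝒢.G n)
    (hg : (QuotientGroup.mk g : 𝒢.Q U) ∉ 𝒢.internalSet U Z) :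
    ∃ δ : ℝ≥0∞, 0 < δ ∧ δ < ⊤ ∧
      {n | ∀ z ∈ Z n, δ ≤ 𝒢.ν n (z⁻¹ * g n)} ∈ U := by
  classical
  by_contra hcon
  push_neg at hcon
  -- the approximating sets
  set B : ℕ → Set ℕ := fun k => {n | ∃ w ∈ Z n, 𝒢.ν n (w⁻¹ * g n) < ((k : ℝ≥0∞) + 1)⁻¹}
    with hB
  have hBU : ∀ k, B k ∈ U := by
    intro k
    have hpos : (0 : ℝ≥0∞) < ((k : ℝ≥0∞) + 1)⁻¹ := ENNReal.inv_pos.mpr (by simp)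
    have htop : ((k : ℝ≥0∞) + 1)⁻¹ < ⊤ := ENNReal.inv_lt_top.mpr (lt_of_lt_of_le one_pos le_add_self)
    have := hcon _ hpos htop
    rw [← Ultrafilter.compl_mem_iff_notMem] at this
    have hc : {n | ∀ z ∈ Z n, ((k : ℝ≥0∞) + 1)⁻¹ ≤ 𝒢.ν n (z⁻¹ * g n)}ᶜ = B k := by
      ext n; simp [hB, not_le]
    rwa [hc] at this
  set C : ℕ → Set ℕ := fun k => Nat.rec (B 0) (fun j s => s ∩ B (j + 1)) k with hC
  have hCU : ∀ k, C k ∈ U := by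
    intro k
    induction k with
    | zero => exact hBU 0
    | succ k ih => exact Filter.inter_mem ih (hBU (k + 1))
  have hCB : ∀ k, C k ⊆ B k := by
    intro k
    cases k with
    | zero => exact subset_rfl
    | succ k => exact Set.inter_subset_right
  set K : ℕ → ℕ := fun n => Nat.findGreatest (fun k => n ∈ C k) n with hK
  set z : ∀ n, 𝒢.G n := fun n =>
    if hn : ∃ w ∈ Z n, 𝒢.ν n (w⁻¹ * g n) < ((K n : ℝ≥0∞) + 1)⁻¹ then hn.choose
    else (hZ n).some with hz
  have hzmem : ∀ n, z n ∈ Z n := by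
    intro n
    simp only [hz]
    by_cases hn : ∃ w ∈ Z n, 𝒢.ν n (w⁻¹ * g n) < ((K n : ℝ≥0∞) + 1)⁻¹
    · simp only [dif_pos hn]; exact hn.choose_spec.1
    · simp only [dif_neg hn]; exact (hZ n).some_mem
  have hE : z⁻¹ * g ∈ 𝒢.E U := by
    rw [PMFamily.mem_E]
    intro ε hε
    obtain ⟨k, hk⟩ := ENNReal.exists_inv_nat_lt hε.ne'
    refine Filter.mem_of_superset (Filter.inter_mem (hCU k) (mem_ge U hU k)) ?_
    rintro n ⟨hnC, hnk⟩
    have hKk : k ≤ K n := by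
      rw [hK]; exact Nat.le_findGreatest hnk hnC
    have hnCK : n ∈ C (K n) := by
      rw [hK]; exact Nat.findGreatest_spec (P := fun k => n ∈ C k) hnk hnC
    have hnBK : n ∈ B (K n) := hCB _ hnCK
    have hcond : ∃ w ∈ Z n, 𝒢.ν n (w⁻¹ * g n) < ((K n : ℝ≥0∞) + 1)⁻¹ := hnBK
    have hlt : 𝒢.ν n ((z n)⁻¹ * g n) < ((K n : ℝ≥0∞) + 1)⁻¹ := by
      simp only [hz]
      simp only [dif_pos hcond]
      exact hcond.choose_spec.2
    have hmono : ((K n : ℝ≥0∞) + 1)⁻¹ ≤ ((k : ℝ≥0∞) + 1)⁻¹ := by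
      apply ENNReal.inv_le_inv'
      gcongr <;> exact_mod_cast hKk
    have hkl : ((k : ℝ≥0∞) + 1)⁻¹ ≤ ((k : ℝ≥0∞))⁻¹ := by
      apply ENNReal.inv_le_inv'
      simp
    show 𝒢.ν n ((z⁻¹ * g) n) < ε
    have : (z⁻¹ * g) n = (z n)⁻¹ * g n := rfl
    rw [this]
    exact lt_of_lt_of_le hlt (le_trans hmono (hkl.trans hk.le))
  exact hg (mem_internal 𝒢 U |>.mpr ⟨z, hzmem, QuotientGroup.eq.mpr hE⟩)

/-- Diagonal limit of a fast Cauchy sequence of representatives. -/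
lemma limit (hU : (U : Filter ℕ) ≤ Filter.cofinite)
    (x : ℕ → ∀ n, 𝒢.G n) (ε : ℕ → ℝ≥0∞)
    (hε0 : ∀ k, 0 < ε k) (hεt : ∀ k, ε k < ⊤)
    (hhalf : ∀ k, 2 * ε (k + 1) ≤ ε k)
    (hd : ∀ k, {n | 𝒢.ν n ((x k n)⁻¹ * x (k + 1) n) < ε k} ∈ U) :
    ∃ h : ∀ n, 𝒢.G n, ∀ K, {n | 𝒢.ν n ((x K n)⁻¹ * h n) < 2 * ε K} ∈ U := by
  classical
  set D : ℕ → Set ℕ := fun k => {n | 𝒢.ν n ((x k n)⁻¹ * x (k + 1) n) < ε k} with hD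
  set C : ℕ → Set ℕ := fun k => Nat.rec Set.univ (fun j s => s ∩ D j) k with hC
  have hCU : ∀ k, C k ∈ U := by
    intro k
    induction k with
    | zero => exact Filter.univ_mem
    | succ k ih => exact Filter.inter_mem ih (hd k)
  have hCD : ∀ k, ∀ j < k, C k ⊆ D j := by
    intro k
    induction k with
    | zero => intro j hj; exact absurd hj (Nat.not_lt_zero j)
    | succ k ih =>
      intro j hj
      rcases Nat.lt_succ_iff_lt_or_eq.mp hj with hj | rfl
      · exact Set.inter_subset_left.trans (ih j hj)
      · exact Set.inter_subset_right
  set K : ℕ → ℕ := fun n => Nat.findGreatest (fun k => n ∈ C k) n with hK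
  refine ⟨fun n => x (K n) n, ?_⟩
  intro M
  refine Filter.mem_of_superset (Filter.inter_mem (hCU M) (mem_ge U hU M)) ?_
  rintro n ⟨hnC, hnM⟩
  have hKM : M ≤ K n := by
    rw [hK]; exact Nat.le_findGreatest hnM hnC
  have hnCK : n ∈ C (K n) := by
    rw [hK]
    exact Nat.findGreatest_spec (P := fun k => n ∈ C k) (Nat.zero_le n) (Set.mem_univ n)
  -- the chain estimate
  have chain : ∀ L, M ≤ L → L ≤ K n →
      𝒢.ν n ((x M n)⁻¹ * x L n) + 2 * ε L ≤ 2 * ε M := by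
    intro L
    induction L with
    | zero =>
      intro hM0 _
      have hM : M = 0 := Nat.le_zero.mp hM0
      subst hM
      simp [𝒢.norm_one n]
    | succ L ih =>
      intro hML hLK
      rcases Nat.lt_or_ge M (L + 1) with hlt | hge
      · -- M ≤ L
        have hML' : M ≤ L := Nat.lt_succ_iff.mp hlt
        have hLK' : L ≤ K n := (Nat.le_succ L).trans hLK
        have hIH := ih hML' hLK'
        have hnD : n ∈ D L := hCD (K n) L (Nat.lt_of_lt_of_le (Nat.lt_succ_self L) hLK) hnCK
        have hDlt : 𝒢.ν n ((x L n)⁻¹ * x (L + 1) n) < ε L := hnD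
        have htri : 𝒢.ν n ((x M n)⁻¹ * x (L + 1) n) ≤
            𝒢.ν n ((x M n)⁻¹ * x L n) + 𝒢.ν n ((x L n)⁻¹ * x (L + 1) n) := by
          have : (x M n)⁻¹ * x (L + 1) n = ((x M n)⁻¹ * x L n) * ((x L n)⁻¹ * x (L + 1) n) := by
            group
          rw [this]
          exact 𝒢.norm_mul n _ _
        calc 𝒢.ν n ((x M n)⁻¹ * x (L + 1) n) + 2 * ε (L + 1)
            ≤ (𝒢.ν n ((x M n)⁻¹ * x L n) + 𝒢.ν n ((x L n)⁻¹ * x (L + 1) n)) + ε L := by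
              exact add_le_add htri (hhalf L)
          _ ≤ (𝒢.ν n ((x M n)⁻¹ * x L n) + ε L) + ε L :=
              add_le_add (add_le_add le_rfl hDlt.le) le_rfl
          _ = 𝒢.ν n ((x M n)⁻¹ * x L n) + 2 * ε L := by ring
          _ ≤ 2 * ε M := hIH
      · -- M = L + 1
        have hM : M = L + 1 := le_antisymm hML hge
        subst hM
        simp [𝒢.norm_one n]
  have hfin := chain (K n) hKM le_rfl
  have hνne : 𝒢.ν n ((x M n)⁻¹ * x (K n) n) ≠ ⊤ := by
    intro htop
    rw [htop] at hfin
    simp only [top_add] at hfin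
    exact absurd (hfin.trans_lt (by
      exact ENNReal.mul_lt_top (by norm_num) (hεt M))) (lt_irrefl ⊤)
  show 𝒢.ν n ((x M n)⁻¹ * x (K n) n) < 2 * ε M
  calc 𝒢.ν n ((x M n)⁻¹ * x (K n) n)
      < 𝒢.ν n ((x M n)⁻¹ * x (K n) n) + 2 * ε (K n) := by
        exact ENNReal.lt_add_right hνne
          (ENNReal.mul_pos (by norm_num) (hε0 (K n)).ne').ne'
    _ ≤ 2 * ε M := hfin

/-- An internal set given by a union of fibers of normalized families is contained in the
union of the corresponding internal sets. -/
lemma union_int (X' : ℕ → ∀ n, Set (𝒢.G n))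
    (hnorm : ∀ m, (∀ n, (X' m n).Nonempty) ∨ (∀ n, X' m n = ∅))
    (N : ℕ) (y : ∀ n, 𝒢.G n) (hy : ∀ n, ∃ m ≤ N, y n ∈ X' m n) :
    ∃ m ≤ N, (QuotientGroup.mk y : 𝒢.Q U) ∈ 𝒢.internalSet U (X' m) := by
  classical
  have hU' : {n | ∃ m ≤ N, n ∈ {n' | y n' ∈ X' m n'}} ∈ U := by
    have : {n | ∃ m ≤ N, n ∈ {n' | y n' ∈ X' m n'}} = Set.univ := by
      ext n; simpa using hy n
    rw [this]; exact Filter.univ_mem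
  obtain ⟨m0, hm0, hA⟩ := pigeon U N _ hU'
  have hne : ∀ n, (X' m0 n).Nonempty := by
    obtain ⟨n1, hn1⟩ := Ultrafilter.nonempty_of_mem hA
    simp only [Set.mem_setOf_eq] at hn1
    rcases hnorm m0 with h | h
    · exact h
    · rw [h n1] at hn1
      exact absurd hn1 (Set.notMem_empty _)
  set z : ∀ n, 𝒢.G n := fun n => if y n ∈ X' m0 n then y n else (hne n).some with hz
  have hzmem : ∀ n, z n ∈ X' m0 n := by
    intro n
    simp only [hz]
    by_cases hn : y n ∈ X' m0 n
    · simpa [if_pos hn] using hn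
    · simp only [if_neg hn]; exact (hne n).some_mem
  have hE : z⁻¹ * y ∈ 𝒢.E U := by
    rw [PMFamily.mem_E]
    intro ε hε
    refine Filter.mem_of_superset hA ?_
    intro n hn
    simp only [Set.mem_setOf_eq] at hn
    have hrfl : (z⁻¹ * y) n = (z n)⁻¹ * y n := rfl
    show 𝒢.ν n ((z⁻¹ * y) n) < ε
    rw [hrfl]
    simp only [hz, if_pos hn]
    rw [inv_mul_cancel, 𝒢.norm_one n]
    exact hε
  exact ⟨m0, hm0, (mem_internal 𝒢 U).mpr ⟨z, hzmem, (QuotientGroup.eq.mpr hE)⟩⟩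

/-- Baire-type statement: some `X m` contains a ball. -/
lemma stage1 (hU : (U : Filter ℕ) ≤ Filter.cofinite)
    (X : ℕ → Set (𝒢.Q U)) (X' : ℕ → ∀ n, Set (𝒢.G n))
    (hXeq : ∀ m, X m = 𝒢.internalSet U (X' m))
    (hnorm : ∀ m, (∀ n, (X' m n).Nonempty) ∨ (∀ n, X' m n = ∅))
    (hcover : (⋃ m, X m) = Set.univ) :
    ∃ (m0 : ℕ) (x0 : ∀ n, 𝒢.G n) (ε0 : ℝ≥0∞), 0 < ε0 ∧ ε0 < ⊤ ∧
      ∀ y : ∀ n, 𝒢.G n, {n | 𝒢.ν n ((x0 n)⁻¹ * y n) < ε0} ∈ U →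
        (QuotientGroup.mk y : 𝒢.Q U) ∈ X m0 := by
  classical
  by_contra hcon
  push_neg at hcon
  have step : ∀ (k : ℕ) (x : ∀ n, 𝒢.G n) (ε : ℝ≥0∞), 0 < ε → ε < ⊤ →
      ∃ (y : ∀ n, 𝒢.G n) (ε' : ℝ≥0∞), 0 < ε' ∧ ε' < ⊤ ∧ 2 * ε' ≤ ε ∧
        ({n | 𝒢.ν n ((x n)⁻¹ * y n) < ε} ∈ U ∧
        {n | ∀ z ∈ X' k n, 4 * ε' ≤ 𝒢.ν n (z⁻¹ * y n)} ∈ U) := by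
    intro k x ε hε hεt
    obtain ⟨y, hy1, hy2⟩ := hcon k x ε hε hεt
    rcases hnorm k with hne | hemp
    · have hy2' : (QuotientGroup.mk y : 𝒢.Q U) ∉ 𝒢.internalSet U (X' k) := by
        rwa [hXeq k] at hy2
      obtain ⟨δ, hδ0, hδt, hδmem⟩ := gap 𝒢 U hU (X' k) hne y hy2'
      refine ⟨y, min (ε / 2) (δ / 4), ?_, ?_, ?_, hy1, ?_⟩
      · exact lt_min (ENNReal.half_pos hε.ne') (ENNReal.div_pos hδ0.ne' (by norm_num))
      · exact (min_le_left _ _).trans_lt (ENNReal.div_lt_top hεt.ne (by norm_num))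
      · calc 2 * min (ε / 2) (δ / 4) ≤ 2 * (ε / 2) := by
              exact mul_le_mul_right (min_le_left _ _) 2
          _ = ε := ENNReal.mul_div_cancel' (by norm_num) (by norm_num)
      · refine Filter.mem_of_superset hδmem ?_
        intro n hn z hz
        refine le_trans ?_ (hn z hz)
        calc 4 * min (ε / 2) (δ / 4) ≤ 4 * (δ / 4) := by
              exact mul_le_mul_right (min_le_right _ _) 4
          _ = δ := ENNReal.mul_div_cancel' (by norm_num) (by norm_num)
    · refine ⟨y, ε / 2, ENNReal.half_pos hε.ne',
        ENNReal.div_lt_top hεt.ne (by norm_num),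
        (ENNReal.mul_div_cancel' (by norm_num) (by norm_num)).le, hy1, ?_⟩
      refine Filter.mem_of_superset Filter.univ_mem ?_
      intro n _ z hz
      rw [hemp n] at hz
      exact absurd hz (Set.notMem_empty z)
  choose! y' e' h1 h2 h3 h4 h5 using step
  set seq : ℕ → (∀ n, 𝒢.G n) × ℝ≥0∞ := fun k =>
    Nat.rec ((1 : ∀ n, 𝒢.G n), (1 : ℝ≥0∞)) (fun k p => (y' k p.1 p.2, e' k p.1 p.2)) k
    with hseq
  have hinv : ∀ k, 0 < (seq k).2 ∧ (seq k).2 < ⊤ := by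
    intro k
    induction k with
    | zero => constructor <;> simp [hseq]
    | succ k ih => exact ⟨h1 k (seq k).1 (seq k).2 ih.1 ih.2, h2 k (seq k).1 (seq k).2 ih.1 ih.2⟩
  obtain ⟨h, hh⟩ := limit 𝒢 U hU (fun k => (seq k).1) (fun k => (seq k).2)
    (fun k => (hinv k).1) (fun k => (hinv k).2)
    (fun k => h3 k (seq k).1 (seq k).2 (hinv k).1 (hinv k).2)
    (fun k => h4 k (seq k).1 (seq k).2 (hinv k).1 (hinv k).2)
  have hsep : ∀ k, {n | ∀ z ∈ X' k n, 4 * (seq (k + 1)).2 ≤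
      𝒢.ν n (z⁻¹ * (seq (k + 1)).1 n)} ∈ U :=
    fun k => h5 k (seq k).1 (seq k).2 (hinv k).1 (hinv k).2
  -- the limit point is in some X k
  have hcov : (QuotientGroup.mk h : 𝒢.Q U) ∈ ⋃ m, X m := hcover ▸ Set.mem_univ _
  obtain ⟨k, hk⟩ := Set.mem_iUnion.mp hcov
  rw [hXeq k] at hk
  obtain ⟨z, hzmem, hzeq⟩ := (mem_internal 𝒢 U).mp hk
  have hE : z⁻¹ * h ∈ 𝒢.E U := QuotientGroup.eq.mp hzeq
  have hSz : {n | 𝒢.ν n ((z n)⁻¹ * h n) < 2 * (seq (k + 1)).2} ∈ U :=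
    (𝒢.mem_E U).mp hE _ (ENNReal.mul_pos (by norm_num) (hinv (k + 1)).1.ne')
  have hbig := Filter.inter_mem (Filter.inter_mem hSz (hh (k + 1))) (hsep k)
  obtain ⟨n, ⟨hn1, hn2⟩, hn3⟩ := Ultrafilter.nonempty_of_mem hbig
  simp only [Set.mem_setOf_eq] at hn1 hn2 hn3
  have hzx : 4 * (seq (k + 1)).2 ≤ 𝒢.ν n ((z n)⁻¹ * (seq (k + 1)).1 n) := hn3 (z n) (hzmem n)
  have htri : 𝒢.ν n ((z n)⁻¹ * (seq (k + 1)).1 n) ≤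
      𝒢.ν n ((z n)⁻¹ * h n) + 𝒢.ν n (((seq (k + 1)).1 n)⁻¹ * h n) := by
    have hre : (z n)⁻¹ * (seq (k + 1)).1 n =
        ((z n)⁻¹ * h n) * ((h n)⁻¹ * (seq (k + 1)).1 n) := by group
    rw [hre]
    refine le_trans (𝒢.norm_mul n _ _) ?_
    have : (h n)⁻¹ * (seq (k + 1)).1 n = (((seq (k + 1)).1 n)⁻¹ * h n)⁻¹ := by group
    rw [this, 𝒢.norm_inv n]
  have hlt : 𝒢.ν n ((z n)⁻¹ * h n) + 𝒢.ν n (((seq (k + 1)).1 n)⁻¹ * h n) <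
      4 * (seq (k + 1)).2 := by
    calc 𝒢.ν n ((z n)⁻¹ * h n) + 𝒢.ν n (((seq (k + 1)).1 n)⁻¹ * h n) <
        2 * (seq (k + 1)).2 + 2 * (seq (k + 1)).2 := ENNReal.add_lt_add hn1 hn2
      _ = 4 * (seq (k + 1)).2 := by ring
  exact absurd (hzx.trans htri) (not_le.mpr hlt)

/-- Uniform approximation of the whole group by finitely many of the internal sets. -/
lemma stage2 (hU : (U : Filter ℕ) ≤ Filter.cofinite)
    (X : ℕ → Set (𝒢.Q U)) (X' : ℕ → ∀ n, Set (𝒢.G n))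
    (hXeq : ∀ m, X m = 𝒢.internalSet U (X' m))
    (hnorm : ∀ m, (∀ n, (X' m n).Nonempty) ∨ (∀ n, X' m n = ∅))
    (hcover : (⋃ m, X m) = Set.univ)
    (ε0 : ℝ≥0∞) (hε0 : 0 < ε0) :
    ∃ N : ℕ, ∀ g : ∀ n, 𝒢.G n, ∃ z : ∀ n, 𝒢.G n,
      ((QuotientGroup.mk z : 𝒢.Q U) ∈ ⋃ m, ⋃ (_ : m ≤ N), X m) ∧
      {n | 𝒢.ν n ((z n)⁻¹ * g n) < ε0} ∈ U := by
  classical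
  have h1m : (1 : 𝒢.Q U) ∈ ⋃ m, X m := hcover ▸ Set.mem_univ _
  obtain ⟨k0, hk0⟩ := Set.mem_iUnion.mp h1m
  rw [hXeq k0] at hk0
  obtain ⟨w0, hw0mem, -⟩ := (mem_internal 𝒢 U).mp hk0
  by_contra hcon
  push_neg at hcon
  choose g hg using hcon
  set T : ℕ → Set ℕ := fun N =>
    {n | ∀ w : 𝒢.G n, (∃ m ≤ N + k0, w ∈ X' m n) → ε0 ≤ 𝒢.ν n (w⁻¹ * g (N + k0) n)} with hT
  have hTU : ∀ N, T N ∈ U := by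
    intro N
    by_contra hTn
    rw [← Ultrafilter.compl_mem_iff_notMem] at hTn
    have hTc : (T N)ᶜ = {n | ∃ w : 𝒢.G n,
        (∃ m ≤ N + k0, w ∈ X' m n) ∧ 𝒢.ν n (w⁻¹ * g (N + k0) n) < ε0} := by
      ext n
      simp only [hT, Set.mem_compl_iff, Set.mem_setOf_eq, not_forall, not_le, exists_prop]
    rw [hTc] at hTn
    set z : ∀ n, 𝒢.G n := fun n =>
      if hn : ∃ w : 𝒢.G n, (∃ m ≤ N + k0, w ∈ X' m n) ∧ 𝒢.ν n (w⁻¹ * g (N + k0) n) < ε0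
      then hn.choose else w0 n with hz
    have hzY : ∀ n, ∃ m ≤ N + k0, z n ∈ X' m n := by
      intro n
      simp only [hz]
      by_cases hn : ∃ w : 𝒢.G n, (∃ m ≤ N + k0, w ∈ X' m n) ∧
          𝒢.ν n (w⁻¹ * g (N + k0) n) < ε0
      · simp only [dif_pos hn]
        exact hn.choose_spec.1
      · simp only [dif_neg hn]
        exact ⟨k0, Nat.le_add_left k0 N, hw0mem n⟩
    obtain ⟨m0, hm0, hmem⟩ := union_int 𝒢 U X' hnorm (N + k0) z hzY
    have hzin : (QuotientGroup.mk z : 𝒢.Q U) ∈ ⋃ m, ⋃ (_ : m ≤ N + k0), X m := by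
      refine Set.mem_iUnion.mpr ⟨m0, Set.mem_iUnion.mpr ⟨hm0, ?_⟩⟩
      rw [hXeq m0]
      exact hmem
    have hclose : {n | 𝒢.ν n ((z n)⁻¹ * g (N + k0) n) < ε0} ∈ U := by
      refine Filter.mem_of_superset hTn ?_
      intro n hn
      simp only [Set.mem_setOf_eq] at hn ⊢
      simp only [hz, dif_pos hn]
      exact hn.choose_spec.2
    exact hg (N + k0) z hzin hclose
  set C : ℕ → Set ℕ := fun N => Nat.rec (T 0) (fun j s => s ∩ T (j + 1)) N with hC
  have hCU : ∀ N, C N ∈ U := by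
    intro N
    induction N with
    | zero => exact hTU 0
    | succ N ih => exact Filter.inter_mem ih (hTU (N + 1))
  have hCT : ∀ N, C N ⊆ T N := by
    intro N
    cases N with
    | zero => exact subset_rfl
    | succ N => exact Set.inter_subset_right
  set K : ℕ → ℕ := fun n => Nat.findGreatest (fun k => n ∈ C k) n with hK
  set h : ∀ n, 𝒢.G n := fun n => g (K n + k0) n with hhdef
  have hcov : (QuotientGroup.mk h : 𝒢.Q U) ∈ ⋃ m, X m := hcover ▸ Set.mem_univ _
  obtain ⟨k, hk⟩ := Set.mem_iUnion.mp hcov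
  rw [hXeq k] at hk
  obtain ⟨z, hzmem, hzeq⟩ := (mem_internal 𝒢 U).mp hk
  have hE : z⁻¹ * h ∈ 𝒢.E U := QuotientGroup.eq.mp hzeq
  have hSz : {n | 𝒢.ν n ((z n)⁻¹ * h n) < ε0} ∈ U := (𝒢.mem_E U).mp hE ε0 hε0
  have hbig := Filter.inter_mem (Filter.inter_mem hSz (hCU k)) (mem_ge U hU k)
  obtain ⟨n, ⟨hn1, hn2⟩, hn3⟩ := Ultrafilter.nonempty_of_mem hbig
  simp only [Set.mem_setOf_eq] at hn1 hn3
  have hKk : k ≤ K n := by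
    rw [hK]; exact Nat.le_findGreatest hn3 hn2
  have hnCK : n ∈ C (K n) := by
    rw [hK]; exact Nat.findGreatest_spec (P := fun k => n ∈ C k) hn3 hn2
  have hnT : n ∈ T (K n) := hCT _ hnCK
  have hge : ε0 ≤ 𝒢.ν n ((z n)⁻¹ * g (K n + k0) n) :=
    hnT (z n) ⟨k, by omega, hzmem n⟩
  have hlt : 𝒢.ν n ((z n)⁻¹ * g (K n + k0) n) < ε0 := hn1
  exact absurd hge (not_le.mpr hlt)

end MetUP

/-- square of a finite subcover, bounded case. If the norms are uniformly
bounded and the metric ultraproduct is covered by countably many metrically internal sets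
`(X_m)`, then there is `N` such that every element is a product of two elements of
`X_0 ∪ … ∪ X_N`. -/
theorem statement3 (𝒢 : PMFamily)
    (hmetric : ∀ n (g : 𝒢.G n), 𝒢.ν n g = 0 ↔ g = 1)
    (U : Ultrafilter ℕ) (hU : (U : Filter ℕ) ≤ Filter.cofinite)
    (hbdd : ∃ C : ℝ≥0∞, C ≠ ⊤ ∧ ∀ n (g : 𝒢.G n), 𝒢.ν n g ≤ C)
    (X : ℕ → Set (𝒢.Q U)) (hX : ∀ m, ∃ Xn : ∀ n, Set (𝒢.G n), X m = 𝒢.internalSet U Xn)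
    (hcover : (⋃ m, X m) = Set.univ) :
    ∃ N : ℕ, (⋃ m ≤ N, X m) * (⋃ m ≤ N, X m) = Set.univ := by
  classical
  set X'' : ℕ → ∀ n, Set (𝒢.G n) := fun m => (hX m).choose with hX''def
  set X' : ℕ → ∀ n, Set (𝒢.G n) := fun m =>
    if ∀ n, (X'' m n).Nonempty then X'' m else fun _ => ∅ with hX'def
  have hXeq : ∀ m, X m = 𝒢.internalSet U (X' m) := by
    intro m
    by_cases hm : ∀ n, (X'' m n).Nonempty
    · rw [hX'def]
      simp only [if_pos hm]
      exact (hX m).choose_spec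
    · rw [hX'def]
      simp only [if_neg hm]
      push_neg at hm
      obtain ⟨n0, hn0⟩ := hm
      rw [← Set.not_nonempty_iff_eq_empty] at hn0
      rw [Set.not_nonempty_iff_eq_empty] at hn0
      have h1 : X m = (∅ : Set (𝒢.Q U)) := by
        rw [(hX m).choose_spec]
        ext q
        simp only [Set.mem_empty_iff_false, iff_false]
        intro hq
        obtain ⟨g, hgmem, -⟩ := (MetUP.mem_internal 𝒢 U).mp hq
        have hg0 := hgmem n0
        have he : (hX m).choose n0 = ∅ := by
          have h'' := hn0
          simp only [hX''def] at h''
          exact h''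
        rw [he] at hg0
        exact absurd hg0 (Set.notMem_empty _)
      have h2 : 𝒢.internalSet U (fun _ => (∅ : Set _)) = ∅ := by
        ext q
        simp only [Set.mem_empty_iff_false, iff_false]
        intro hq
        obtain ⟨g, hgmem, -⟩ := (MetUP.mem_internal 𝒢 U).mp hq
        exact absurd (hgmem 0) (Set.notMem_empty _)
      rw [h1, h2]
  have hnorm : ∀ m, (∀ n, (X' m n).Nonempty) ∨ (∀ n, X' m n = ∅) := by
    intro m
    by_cases hm : ∀ n, (X'' m n).Nonempty
    · left; rw [hX'def]; simp only [if_pos hm]; exact hm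
    · right; rw [hX'def]; simp only [if_neg hm]; intro n; trivial
  obtain ⟨m0, x0, ε0, hε0, hε0t, hball⟩ := MetUP.stage1 𝒢 U hU X X' hXeq hnorm hcover
  obtain ⟨N, hN⟩ := MetUP.stage2 𝒢 U hU X X' hXeq hnorm hcover ε0 hε0
  refine ⟨max N m0, ?_⟩
  rw [Set.eq_univ_iff_forall]
  intro q
  obtain ⟨g, rfl⟩ := QuotientGroup.mk_surjective q
  obtain ⟨z, hz1, hz2⟩ := hN (x0⁻¹ * g)
  have hmem1 : (QuotientGroup.mk (g * z⁻¹) : 𝒢.Q U) ∈ X m0 := by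
    apply hball
    have hsets : {n | 𝒢.ν n ((x0 n)⁻¹ * (g * z⁻¹) n) < ε0}
        = {n | 𝒢.ν n ((z n)⁻¹ * (x0⁻¹ * g) n) < ε0} := by
      ext n
      simp only [Set.mem_setOf_eq, Pi.mul_apply, Pi.inv_apply]
      have hconj : 𝒢.ν n ((x0 n)⁻¹ * (g n * (z n)⁻¹))
          = 𝒢.ν n ((z n)⁻¹ * ((x0 n)⁻¹ * g n)) := by
        have hre : (x0 n)⁻¹ * (g n * (z n)⁻¹) =
            ((x0 n)⁻¹ * g n) * ((z n)⁻¹ * ((x0 n)⁻¹ * g n)) * ((x0 n)⁻¹ * g n)⁻¹ := by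
          group
        rw [hre, 𝒢.norm_conj n]
      rw [hconj]
    rw [hsets]
    exact hz2
  have hS1 : (QuotientGroup.mk (g * z⁻¹) : 𝒢.Q U) ∈ ⋃ m, ⋃ (_ : m ≤ max N m0), X m :=
    Set.mem_iUnion.mpr ⟨m0, Set.mem_iUnion.mpr ⟨le_max_right N m0, hmem1⟩⟩
  have hS2 : (QuotientGroup.mk z : 𝒢.Q U) ∈ ⋃ m, ⋃ (_ : m ≤ max N m0), X m := by
    obtain ⟨m, hm⟩ := Set.mem_iUnion.mp hz1
    obtain ⟨hmle, hmm⟩ := Set.mem_iUnion.mp hm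
    exact Set.mem_iUnion.mpr ⟨m, Set.mem_iUnion.mpr ⟨hmle.trans (le_max_left N m0), hmm⟩⟩
  have hprod := Set.mul_mem_mul hS1 hS2
  have heq : (QuotientGroup.mk (g * z⁻¹) : 𝒢.Q U) * QuotientGroup.mk z
      = QuotientGroup.mk g := by
    rw [← QuotientGroup.mk_mul]
    congr 1
    group
  rwa [heq] at hprod
end

section
/- Let 𝒢 = (G_n,‖·‖_n)_{n∈ℕ} be a family of metric groups with sup_n sup_{g∈G_n} ‖g‖_n < ∞, and 𝒰 a nonprincipal ultrafilter on ℕ. Suppose X ⊆ 𝒢*_met is a metrically internal subset. If X generates 𝒢*_met as a group, then X generates in finitely many steps: there is N ∈ ℕ such that 𝒢*_met = (X ∪ X⁻¹)^N, i.e., every element of 𝒢*_met is a product of N elements of X ∪ X⁻¹. -/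
/-!
Put `Y N = ⋃ m ≤ N, (X ∪ X⁻¹) ^ m`. By Łoś, `Y N` is the internal set of coordinatewise products
of at most `N` elements of `Xn n ∪ (Xn n)⁻¹`. Internal sets are closed in the ultraproduct metric,
and the `Y N` cover the ultraproduct because `X` generates it. The ultraproduct is complete, so
by Baire some `Y M` contains a translate `x * B` of the ball `B` of radius `ε` about `1`; then
`B ⊆ Y (j + M)` whenever `x⁻¹ ∈ Y j`. Countable saturation gives one `N` such that for `U`-most
`n` the products of at most `N` generators are `ε`-dense in `G n`, so every element lies in
`Y N * B ⊆ Y (N + (j + M))`.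
-/

open Filter Set Pointwise ENNReal

-- Countable saturation: at coordinate `n`, use a witness for the largest `k ≤ n` that is still
-- satisfiable there.
theorem Filter.exists_forall_eventually_of_le_cofinite {l : Filter ℕ} (hl : l ≤ cofinite)
    {α : ℕ → Type*} [∀ n, Nonempty (α n)] (P : ℕ → ∀ n, α n → Prop)
    (hP : ∀ k, ∀ᶠ n in l, ∃ a, ∀ j ≤ k, P j n a) :
    ∃ a : ∀ n, α n, ∀ k, ∀ᶠ n in l, P k n (a n) := by
  classical
  let S : ℕ → Set ℕ := fun k => {n | ∃ a, ∀ j ≤ k, P j n a}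
  let φ : ℕ → ℕ := fun n => Nat.findGreatest (fun k => n ∈ S k) n
  refine ⟨fun n => if h : n ∈ S (φ n) then h.choose else Classical.arbitrary _, fun k => ?_⟩
  have hk : ∀ᶠ n in l, k ≤ n := (Nat.cofinite_eq_atTop ▸ hl) (eventually_ge_atTop k)
  filter_upwards [hP k, hk] with n hSk hkn
  have hφ : n ∈ S (φ n) := Nat.findGreatest_spec (P := fun k => n ∈ S k) hkn hSk
  rw [dif_pos hφ]
  exact hφ.choose_spec k (Nat.le_findGreatest hkn hSk)

theorem ENNReal.sum_Ico_le_two_mul {r : ℕ → ℝ≥0∞} (hr : ∀ i, 2 * r (i + 1) ≤ r i) (k m : ℕ) :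
    ∑ i ∈ Finset.Ico k m, r i ≤ 2 * r k := by
  have key : ∀ m, k ≤ m → ∑ i ∈ Finset.Ico k m, r i + 2 * r m ≤ 2 * r k := by
    intro m hkm
    induction m, hkm using Nat.le_induction with
    | base => simp
    | succ m hkm ih =>
      calc ∑ i ∈ Finset.Ico k (m + 1), r i + 2 * r (m + 1)
          ≤ ∑ i ∈ Finset.Ico k m, r i + (r m + r m) := by
            rw [Finset.sum_Ico_succ_top hkm, add_assoc]
            gcongr
            exact hr m
        _ ≤ 2 * r k := by rwa [← two_mul]
  rcases le_total k m with hkm | hmk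
  · exact le_self_add.trans (key m hkm)
  · simp [Finset.Ico_eq_empty_of_le hmk]

theorem ENNReal.exists_pos_two_mul_lt {a : ℝ≥0∞} (ha : 0 < a) : ∃ r > 0, 2 * r < a := by
  obtain ⟨r, hr0, hr⟩ := exists_between (ENNReal.half_pos ha.ne')
  exact ⟨r, hr0, by rwa [ENNReal.lt_div_iff_mul_lt (by simp) (by simp), mul_comm] at hr⟩

theorem Submonoid.exists_mem_pow_of_mem_closure {M : Type*} [Monoid M] {S : Set M} {x : M}
    (hx : x ∈ Submonoid.closure S) : ∃ m : ℕ, x ∈ S ^ m := by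
  induction hx using Submonoid.closure_induction with
  | mem x hx => exact ⟨1, by rwa [pow_one]⟩
  | one => exact ⟨0, by simp⟩
  | mul x y _ _ hx hy =>
    obtain ⟨a, ha⟩ := hx
    obtain ⟨b, hb⟩ := hy
    exact ⟨a + b, pow_add S a b ▸ Set.mul_mem_mul ha hb⟩

theorem Set.biUnion_pow_mul_subset {M : Type*} [Monoid M] (S : Set M) (N K : ℕ) :
    (⋃ m ≤ N, S ^ m) * (⋃ m ≤ K, S ^ m) ⊆ ⋃ m ≤ N + K, S ^ m := by
  rintro _ ⟨x, hx, y, hy, rfl⟩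
  obtain ⟨a, ha, hxa⟩ := Set.mem_iUnion₂.1 hx
  obtain ⟨b, hb, hyb⟩ := Set.mem_iUnion₂.1 hy
  exact Set.mem_iUnion₂.2 ⟨a + b, add_le_add ha hb, pow_add S a b ▸ Set.mul_mem_mul hxa hyb⟩

theorem Subgroup.exists_mem_biUnion_pow_of_closure_eq_top {G : Type*} [Group G] {S : Set G}
    (hS : Subgroup.closure S = ⊤) (x : G) : ∃ N, x ∈ ⋃ m ≤ N, (S ∪ S⁻¹) ^ m := by
  have hx : x ∈ (Subgroup.closure S).toSubmonoid := hS ▸ Subgroup.mem_top x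
  rw [Subgroup.closure_toSubmonoid] at hx
  obtain ⟨m, hm⟩ := Submonoid.exists_mem_pow_of_mem_closure hx
  exact ⟨m, Set.mem_iUnion₂.2 ⟨m, le_rfl, hm⟩⟩

namespace PMFamily

def coordBall (𝒢 : PMFamily) (ε : ℝ≥0∞) (n : ℕ) : Set (𝒢.G n) := {g | 𝒢.ν n g < ε}

variable {𝒢 : PMFamily} {U : Ultrafilter ℕ}

theorem nu_inv_mul_le_sum {n : ℕ} (x : ℕ → 𝒢.G n) {k m : ℕ} (hkm : k ≤ m) :
    𝒢.ν n ((x k)⁻¹ * x m) ≤ ∑ i ∈ Finset.Ico k m, 𝒢.ν n ((x i)⁻¹ * x (i + 1)) := by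
  induction m, hkm using Nat.le_induction with
  | base => simp [𝒢.norm_one]
  | succ m hkm ih =>
    rw [Finset.sum_Ico_succ_top hkm]
    calc 𝒢.ν n ((x k)⁻¹ * x (m + 1)) = 𝒢.ν n ((x k)⁻¹ * x m * ((x m)⁻¹ * x (m + 1))) := by
          group
      _ ≤ _ := (𝒢.norm_mul n _ _).trans (add_le_add_left ih _)

theorem mk_eq_mk_iff {g h : ∀ n, 𝒢.G n} :
    (QuotientGroup.mk g : 𝒢.Q U) = QuotientGroup.mk h ↔
      ∀ ε > 0, ∀ᶠ n in U, 𝒢.ν n ((g n)⁻¹ * h n) < ε :=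
  QuotientGroup.eq

theorem mk_eq_mk_of_eventuallyEq {g h : ∀ n, 𝒢.G n} (hgh : ∀ᶠ n in U, g n = h n) :
    (QuotientGroup.mk g : 𝒢.Q U) = QuotientGroup.mk h :=
  mk_eq_mk_iff.2 fun _ hε => hgh.mono fun n hn => by simpa [hn, 𝒢.norm_one] using hε

variable {V W : ∀ n, Set (𝒢.G n)}

theorem internalSet_mono (hVW : ∀ n, V n ⊆ W n) : 𝒢.internalSet U V ⊆ 𝒢.internalSet U W :=
  Set.image_mono fun _ hg n => hVW n (hg n)

theorem mk_mem_internalSet_of_eventually (hW : ∀ n, (W n).Nonempty) {g : ∀ n, 𝒢.G n}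
    (hg : ∀ᶠ n in U, g n ∈ W n) : (QuotientGroup.mk g : 𝒢.Q U) ∈ 𝒢.internalSet U W := by
  classical
  refine ⟨fun n => if g n ∈ W n then g n else (hW n).some, fun n => ?_,
    mk_eq_mk_of_eventuallyEq ?_⟩
  · dsimp only
    split_ifs with h
    exacts [h, (hW n).some_mem]
  · filter_upwards [hg] with n hn
    simp [hn]

theorem internalSet_one : 𝒢.internalSet U (fun n => (1 : Set (𝒢.G n))) = 1 := by
  ext x
  constructor
  · rintro ⟨g, hg, rfl⟩
    rw [show g = 1 from funext hg]
    rfl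
  · rintro rfl
    exact ⟨1, fun n => rfl, rfl⟩

theorem internalSet_mul :
    𝒢.internalSet U (fun n => V n * W n) = 𝒢.internalSet U V * 𝒢.internalSet U W := by
  ext x
  constructor
  · rintro ⟨g, hg, rfl⟩
    choose a ha b hb hab using hg
    exact ⟨_, ⟨a, ha, rfl⟩, _, ⟨b, hb, rfl⟩, congrArg _ (funext hab)⟩
  · rintro ⟨_, ⟨a, ha, rfl⟩, _, ⟨b, hb, rfl⟩, rfl⟩
    exact ⟨a * b, fun n => Set.mul_mem_mul (ha n) (hb n), rfl⟩

theorem internalSet_pow (m : ℕ) :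
    𝒢.internalSet U (fun n => W n ^ m) = 𝒢.internalSet U W ^ m := by
  induction m with
  | zero => simpa only [pow_zero] using internalSet_one
  | succ m ih => simp only [pow_succ, internalSet_mul, ih]

theorem internalSet_inv : 𝒢.internalSet U (fun n => (W n)⁻¹) = (𝒢.internalSet U W)⁻¹ := by
  ext x
  constructor
  · rintro ⟨g, hg, rfl⟩
    exact ⟨g⁻¹, hg, rfl⟩
  · rintro ⟨g, hg, hgx⟩
    exact ⟨g⁻¹, fun n => by simpa using hg n, by rw [QuotientGroup.mk_inv, hgx, inv_inv]⟩

theorem internalSet_union (hV : ∀ n, (V n).Nonempty) (hW : ∀ n, (W n).Nonempty) :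
    𝒢.internalSet U (fun n => V n ∪ W n) = 𝒢.internalSet U V ∪ 𝒢.internalSet U W := by
  refine subset_antisymm ?_ (Set.union_subset (internalSet_mono fun _ => subset_union_left)
    (internalSet_mono fun _ => subset_union_right))
  rintro _ ⟨g, hg, rfl⟩
  rcases Ultrafilter.eventually_or.1 (Eventually.of_forall (f := (U : Filter ℕ)) hg) with h | h
  exacts [Or.inl (mk_mem_internalSet_of_eventually hV h),
    Or.inr (mk_mem_internalSet_of_eventually hW h)]

theorem internalSet_biUnion {ι : Type*} {I : Set ι} (hI : I.Finite)
    {V : ι → ∀ n, Set (𝒢.G n)} (hV : ∀ i ∈ I, ∀ n, (V i n).Nonempty) :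
    𝒢.internalSet U (fun n => ⋃ i ∈ I, V i n) = ⋃ i ∈ I, 𝒢.internalSet U (V i) := by
  refine subset_antisymm ?_ (Set.iUnion₂_subset fun i hi =>
    internalSet_mono fun n => Set.subset_biUnion_of_mem (u := fun i => V i n) hi)
  rintro _ ⟨g, hg, rfl⟩
  have hcov : (⋃ i ∈ I, {n | g n ∈ V i n}) ∈ U :=
    Filter.univ_mem' fun n => by simpa using hg n
  obtain ⟨i, hi, hgi⟩ := (Ultrafilter.finite_biUnion_mem_iff hI).1 hcov
  exact Set.mem_biUnion hi (mk_mem_internalSet_of_eventually (hV i hi) hgi)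

-- Internal sets with nonempty coordinates are closed in the ultraproduct metric.
theorem mem_internalSet_iff (hU : (U : Filter ℕ) ≤ cofinite) (hW : ∀ n, (W n).Nonempty)
    (g : ∀ n, 𝒢.G n) :
    (QuotientGroup.mk g : 𝒢.Q U) ∈ 𝒢.internalSet U W ↔
      ∀ ε > 0, ∀ᶠ n in U, ∃ z ∈ W n, 𝒢.ν n ((g n)⁻¹ * z) < ε := by
  constructor
  · rintro ⟨h, hh, hhg⟩ ε hε
    exact (mk_eq_mk_iff.1 hhg.symm ε hε).mono fun n hn => ⟨h n, hh n, hn⟩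
  · intro happrox
    have : ∀ n, Nonempty (W n) := fun n => (hW n).to_subtype
    obtain ⟨h, hh⟩ := exists_forall_eventually_of_le_cofinite hU
      (fun k n (z : W n) => 𝒢.ν n ((g n)⁻¹ * z) < (k : ℝ≥0∞)⁻¹) fun k =>
        (happrox _ (ENNReal.inv_pos.2 (natCast_ne_top k))).mono fun n ⟨z, hz, hlt⟩ =>
          ⟨⟨z, hz⟩, fun j hj => hlt.trans_le (ENNReal.inv_le_inv.2 (Nat.cast_le.2 hj))⟩
    refine ⟨fun n => h n, fun n => (h n).2, (mk_eq_mk_iff.2 fun ε hε => ?_).symm⟩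
    obtain ⟨k, hk⟩ := ENNReal.exists_inv_nat_lt hε.ne'
    exact (hh k).mono fun n hn => hn.trans hk

theorem exists_pos_forall_mul_notMem_internalSet (hU : (U : Filter ℕ) ≤ cofinite)
    (hW : ∀ n, (W n).Nonempty) {g : ∀ n, 𝒢.G n}
    (hg : (QuotientGroup.mk g : 𝒢.Q U) ∉ 𝒢.internalSet U W) :
    ∃ δ > 0, ∀ c : ∀ n, 𝒢.G n, (∀ᶠ n in U, 𝒢.ν n (c n) < δ) →
      (QuotientGroup.mk (g * c) : 𝒢.Q U) ∉ 𝒢.internalSet U W := by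
  rw [mem_internalSet_iff hU hW] at hg
  push Not at hg
  obtain ⟨δ, hδ, hfar⟩ := hg
  refine ⟨δ / 2, ENNReal.half_pos hδ.ne', fun c hc hgc => ?_⟩
  obtain ⟨n, hcn, ⟨z, hz, hzn⟩, hfarn⟩ := (hc.and (((mem_internalSet_iff hU hW _).1 hgc _
    (ENNReal.half_pos hδ.ne')).and hfar)).exists
  refine (hfarn z hz).not_gt ?_
  calc 𝒢.ν n ((g n)⁻¹ * z) = 𝒢.ν n (c n * ((g n * c n)⁻¹ * z)) := by group
    _ ≤ 𝒢.ν n (c n) + 𝒢.ν n ((g n * c n)⁻¹ * z) := 𝒢.norm_mul n _ _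
    _ < δ / 2 + δ / 2 := ENNReal.add_lt_add hcn hzn
    _ = δ := ENNReal.add_halves δ

theorem exists_eventually_mem_mul_coordBall (hU : (U : Filter ℕ) ≤ cofinite)
    {Z : ℕ → ∀ n, Set (𝒢.G n)} (hZ : Monotone Z)
    (hcover : ∀ x : 𝒢.Q U, ∃ N, x ∈ 𝒢.internalSet U (Z N)) {ε : ℝ≥0∞} (hε : 0 < ε) :
    ∃ N, ∀ᶠ n in U, ∀ g : 𝒢.G n, g ∈ Z N n * 𝒢.coordBall ε n := by
  by_contra! hfar
  obtain ⟨g, hg⟩ := exists_forall_eventually_of_le_cofinite hU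
    (fun N n g => g ∉ Z N n * 𝒢.coordBall ε n) fun N =>
      (hfar N).mono fun n ⟨g, hg⟩ =>
        ⟨g, fun j hj hgj => hg (Set.mul_subset_mul_right (hZ hj n) hgj)⟩
  obtain ⟨N, h, hh, hhg⟩ := hcover (QuotientGroup.mk g)
  obtain ⟨n, hn, hgn⟩ := ((mk_eq_mk_iff.1 hhg ε hε).and (hg N)).exists
  exact hgn ⟨h n, hh n, (h n)⁻¹ * g n, hn, mul_inv_cancel_left _ _⟩

-- Baire category theorem for a countable cover of the ultraproduct by internal sets.
theorem exists_mul_ball_subset_of_cover (hU : (U : Filter ℕ) ≤ cofinite)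
    {Z : ℕ → ∀ n, Set (𝒢.G n)} (hZ : ∀ N n, (Z N n).Nonempty)
    (hcover : ∀ x : 𝒢.Q U, ∃ N, x ∈ 𝒢.internalSet U (Z N)) :
    ∃ (N : ℕ) (x : 𝒢.Q U), ∃ ε > 0,
      ∀ u ∈ 𝒢.internalSet U (𝒢.coordBall ε), x * u ∈ 𝒢.internalSet U (Z N) := by
  by_contra! hnot
  have step : ∀ (k : ℕ) (g : ∀ n, 𝒢.G n) (r : ℝ≥0∞), 0 < r →
      ∃ (b : ∀ n, 𝒢.G n) (r' : ℝ≥0∞), (∀ n, 𝒢.ν n (b n) < r) ∧ 0 < r' ∧ 2 * r' ≤ r ∧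
        ∀ c : ∀ n, 𝒢.G n, (∀ᶠ n in U, 𝒢.ν n (c n) ≤ 2 * r') →
          (QuotientGroup.mk (g * b * c) : 𝒢.Q U) ∉ 𝒢.internalSet U (Z k) := by
    intro k g r hr
    obtain ⟨_, ⟨b, hb, rfl⟩, hgb⟩ := hnot k (QuotientGroup.mk g) r hr
    obtain ⟨δ, hδ, hfar⟩ := exists_pos_forall_mul_notMem_internalSet hU (hZ k) hgb
    obtain ⟨r', hr', hr'lt⟩ := ENNReal.exists_pos_two_mul_lt (lt_min hr hδ)
    exact ⟨b, r', hb, hr', (hr'lt.trans_le (min_le_left _ _)).le, fun c hc =>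
      hfar c (hc.mono fun n hn => hn.trans_lt (hr'lt.trans_le (min_le_right _ _)))⟩
  choose! b r' hb hr' hr'r hfar using step
  obtain ⟨seq, hseq0, hseq⟩ : ∃ seq : ℕ → (∀ n, 𝒢.G n) × ℝ≥0∞, seq 0 = (1, 1) ∧
      ∀ k, seq (k + 1) = ((seq k).1 * b k (seq k).1 (seq k).2, r' k (seq k).1 (seq k).2) :=
    ⟨fun k => Nat.rec (1, 1) (fun k p => (p.1 * b k p.1 p.2, r' k p.1 p.2)) k, rfl, fun _ => rfl⟩
  have hpos : ∀ k, 0 < (seq k).2 := by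
    intro k
    induction k with
    | zero => simp [hseq0]
    | succ k ih => simpa [hseq] using hr' k _ _ ih
  -- the diagonal sequence is the limit of the Cauchy sequence `(seq k).1`
  let lim : ∀ n, 𝒢.G n := fun n => (seq n).1 n
  have hlim : ∀ k n, k ≤ n → 𝒢.ν n (((seq k).1 n)⁻¹ * lim n) ≤ 2 * (seq k).2 := by
    intro k n hkn
    calc 𝒢.ν n (((seq k).1 n)⁻¹ * lim n)
        ≤ ∑ i ∈ Finset.Ico k n, 𝒢.ν n (((seq i).1 n)⁻¹ * (seq (i + 1)).1 n) :=
          nu_inv_mul_le_sum (fun i => (seq i).1 n) hkn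
      _ ≤ ∑ i ∈ Finset.Ico k n, (seq i).2 := Finset.sum_le_sum fun i _ => by
          simpa [hseq] using (hb i _ _ (hpos i) n).le
      _ ≤ 2 * (seq k).2 := ENNReal.sum_Ico_le_two_mul (fun i => by
          simpa [hseq] using hr'r i _ _ (hpos i)) k n
  obtain ⟨N, hN⟩ := hcover (QuotientGroup.mk lim)
  refine hfar N (seq N).1 (seq N).2 (hpos N) ((seq (N + 1)).1⁻¹ * lim) ?_ ?_
  · filter_upwards [(Nat.cofinite_eq_atTop ▸ hU) (eventually_ge_atTop (N + 1))] with n hn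
    simpa [hseq] using hlim (N + 1) n hn
  · rwa [hseq, mul_inv_cancel_left]

theorem exists_forall_mem_internalSet_of_cover (hU : (U : Filter ℕ) ≤ cofinite)
    {Z : ℕ → ∀ n, Set (𝒢.G n)} (hZ1 : ∀ N n, (1 : 𝒢.G n) ∈ Z N n)
    (hZmul : ∀ N K n, Z N n * Z K n ⊆ Z (N + K) n)
    (hcover : ∀ x : 𝒢.Q U, ∃ N, x ∈ 𝒢.internalSet U (Z N)) :
    ∃ N, ∀ x : 𝒢.Q U, x ∈ 𝒢.internalSet U (Z N) := by
  have hmono : Monotone Z := fun N K hNK n z hz => by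
    obtain ⟨d, rfl⟩ := Nat.exists_eq_add_of_le hNK
    simpa using hZmul N d n (Set.mul_mem_mul hz (hZ1 d n))
  have hY (N K : ℕ) : 𝒢.internalSet U (Z N) * 𝒢.internalSet U (Z K) ⊆
      𝒢.internalSet U (Z (N + K)) :=
    internalSet_mul (U := U) ▸ internalSet_mono (hZmul N K)
  obtain ⟨M, x, ε, hε, hball⟩ := exists_mul_ball_subset_of_cover hU (fun N n => ⟨1, hZ1 N n⟩) hcover
  obtain ⟨j, hj⟩ := hcover x⁻¹
  obtain ⟨N, hN⟩ := exists_eventually_mem_mul_coordBall hU hmono hcover hε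
  refine ⟨N + (j + M), fun y => ?_⟩
  obtain ⟨g, rfl⟩ := QuotientGroup.mk_surjective y
  have hg := mk_mem_internalSet_of_eventually (U := U)
    (fun n => ⟨_, Set.mul_mem_mul (hZ1 N n) (show 𝒢.ν n 1 < ε by rwa [𝒢.norm_one])⟩)
    (hN.mono fun n hn => hn (g n))
  rw [internalSet_mul] at hg
  refine hY N (j + M) (Set.mul_subset_mul_left (fun u hu => ?_) hg)
  simpa using hY j M (Set.mul_mem_mul hj (hball u hu))

theorem internalSet_biUnion_pow_union_inv {Xn : ∀ n, Set (𝒢.G n)} (hXn : ∀ n, (Xn n).Nonempty)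
    (N : ℕ) :
    𝒢.internalSet U (fun n => ⋃ m ≤ N, (Xn n ∪ (Xn n)⁻¹) ^ m) =
      ⋃ m ≤ N, (𝒢.internalSet U Xn ∪ (𝒢.internalSet U Xn)⁻¹) ^ m := by
  refine (internalSet_biUnion (Set.finite_Iic N) (V := fun m n => (Xn n ∪ (Xn n)⁻¹) ^ m)
    fun m _ n => (hXn n).inl.pow).trans (Set.iUnion₂_congr fun m _ => ?_)
  rw [internalSet_pow, internalSet_union hXn fun n => (hXn n).inv, internalSet_inv]

end PMFamily

theorem statement4_general (𝒢 : PMFamily)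
    (U : Ultrafilter ℕ) (hU : (U : Filter ℕ) ≤ Filter.cofinite)
    (Xn : ∀ n, Set (𝒢.G n)) (X : Set (𝒢.Q U)) (hX : X = 𝒢.internalSet U Xn)
    (hgen : Subgroup.closure X = (⊤ : Subgroup (𝒢.Q U))) :
    ∃ N : ℕ, (⋃ m ≤ N, (X ∪ X⁻¹) ^ m) = Set.univ := by
  subst hX
  by_cases hXn : ∀ n, (Xn n).Nonempty
  · set Z : ℕ → ∀ n, Set (𝒢.G n) := fun N n => ⋃ m ≤ N, (Xn n ∪ (Xn n)⁻¹) ^ m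
    have hZ (N : ℕ) : 𝒢.internalSet U (Z N) =
        ⋃ m ≤ N, (𝒢.internalSet U Xn ∪ (𝒢.internalSet U Xn)⁻¹) ^ m :=
      PMFamily.internalSet_biUnion_pow_union_inv hXn N
    have hcover (x : 𝒢.Q U) : ∃ N, x ∈ 𝒢.internalSet U (Z N) := by
      simpa only [hZ] using Subgroup.exists_mem_biUnion_pow_of_closure_eq_top hgen x
    obtain ⟨N, hN⟩ := PMFamily.exists_forall_mem_internalSet_of_cover hU
      (fun N n => Set.mem_iUnion₂.2 ⟨0, Nat.zero_le N, rfl⟩)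
      (fun N K n => Set.biUnion_pow_mul_subset (Xn n ∪ (Xn n)⁻¹) N K) hcover
    exact ⟨N, Set.eq_univ_of_forall fun x => hZ N ▸ hN x⟩
  · push Not at hXn
    obtain ⟨n₀, hn₀⟩ := hXn
    have hX : 𝒢.internalSet U Xn = ∅ :=
      Set.eq_empty_of_forall_notMem fun _ ⟨g, hg, _⟩ => Set.notMem_empty _ (hn₀ ▸ hg n₀)
    rw [hX, Subgroup.closure_empty] at hgen
    refine ⟨0, Set.eq_univ_of_forall fun x => Set.mem_iUnion₂.2 ⟨0, le_rfl, ?_⟩⟩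
    simpa using Subgroup.mem_bot.1 (hgen ▸ Subgroup.mem_top x)

/-- bounded generation, bounded case. If the norms are uniformly bounded,
`X` is a metrically internal subset of the metric ultraproduct, and `X` generates the metric
ultraproduct as a group, then `X` generates in finitely many steps: there is `N` such that
every element is a product of at most `N` elements of `X ∪ X⁻¹`. -/
theorem statement4 (𝒢 : PMFamily)
    (hmetric : ∀ n (g : 𝒢.G n), 𝒢.ν n g = 0 ↔ g = 1)
    (U : Ultrafilter ℕ) (hU : (U : Filter ℕ) ≤ Filter.cofinite)
    (hbdd : ∃ C : ℝ≥0∞, C ≠ ⊤ ∧ ∀ n (g : 𝒢.G n), 𝒢.ν n g ≤ C)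
    (Xn : ∀ n, Set (𝒢.G n)) (X : Set (𝒢.Q U)) (hX : X = 𝒢.internalSet U Xn)
    (hgen : Subgroup.closure X = (⊤ : Subgroup (𝒢.Q U))) :
    ∃ N : ℕ, (⋃ m ≤ N, (X ∪ X⁻¹) ^ m) = Set.univ :=
  statement4_general 𝒢 U hU Xn X hX hgen
end

section
/- Let 𝒢 = (G_n,‖·‖_n)_{n∈ℕ} be a family of metric groups with sup_n sup_{g∈G_n} ‖g‖_n < ∞, 𝒰 a nonprincipal ultrafilter on ℕ, and fix ε > 0. If the metric ultraproduct 𝒢*_met is an ε-torsion group, then 𝒢*_met is almost uniformly 2ε-torsion: there is N ∈ ℕ such that for every g ∈ 𝒢*_met there is m ≤ N with ‖g^m‖ < 2ε. -/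
open Filter Set Pointwise ENNReal

namespace PMFamily

variable (𝒢 : PMFamily) (U : Ultrafilter ℕ)

theorem pnorm_le_of_mk_eq {a b : ∀ n, 𝒢.G n}
    (hab : (QuotientGroup.mk a : 𝒢.Q U) = QuotientGroup.mk b) :
    𝒢.pnorm U b ≤ 𝒢.pnorm U a := by
  have he : a⁻¹ * b ∈ 𝒢.E U := QuotientGroup.eq.mp hab
  refine ENNReal.le_of_forall_pos_le_add fun δ hδ hlt => ?_
  have hδ2 : (0 : ℝ≥0∞) < (δ : ℝ≥0∞) / 2 := by
    apply ENNReal.div_pos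
    · exact_mod_cast hδ.ne'
    · exact ENNReal.ofNat_ne_top
  have h1 : ∀ᶠ n in (U : Filter ℕ), 𝒢.ν n (a n) < 𝒢.pnorm U a + (δ : ℝ≥0∞) / 2 :=
    Filter.eventually_lt_of_limsup_lt (ENNReal.lt_add_right hlt.ne hδ2.ne')
      (by isBoundedDefault)
  have h2 : ∀ᶠ n in (U : Filter ℕ), 𝒢.ν n ((a⁻¹ * b) n) < (δ : ℝ≥0∞) / 2 :=
    he _ hδ2
  have h3 : ∀ᶠ n in (U : Filter ℕ),
      𝒢.ν n (b n) ≤ 𝒢.pnorm U a + (δ : ℝ≥0∞) := by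
    filter_upwards [h1, h2] with n hn1 hn2
    have hb : b n = a n * (a⁻¹ * b) n := by
      simp [Pi.mul_apply, Pi.inv_apply, mul_assoc]
    calc 𝒢.ν n (b n) = 𝒢.ν n (a n * (a⁻¹ * b) n) := by rw [← hb]
      _ ≤ 𝒢.ν n (a n) + 𝒢.ν n ((a⁻¹ * b) n) := 𝒢.norm_mul n _ _
      _ ≤ (𝒢.pnorm U a + (δ : ℝ≥0∞) / 2) + (δ : ℝ≥0∞) / 2 :=
          add_le_add hn1.le hn2.le
      _ = 𝒢.pnorm U a + (δ : ℝ≥0∞) := by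
          rw [add_assoc, ENNReal.add_halves]
  exact Filter.limsup_le_of_le (by isBoundedDefault) h3

theorem pnorm_congr {a b : ∀ n, 𝒢.G n}
    (hab : (QuotientGroup.mk a : 𝒢.Q U) = QuotientGroup.mk b) :
    𝒢.pnorm U a = 𝒢.pnorm U b :=
  le_antisymm (𝒢.pnorm_le_of_mk_eq U hab.symm) (𝒢.pnorm_le_of_mk_eq U hab)

theorem qnorm_mk (a : ∀ n, 𝒢.G n) :
    𝒢.qnorm U (QuotientGroup.mk a) = 𝒢.pnorm U a := by
  apply 𝒢.pnorm_congr U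
  exact Quotient.out_eq _

end PMFamily

/-- almost uniform torsion, bounded case. Fix `ε > 0`. If the norms are
uniformly bounded and the metric ultraproduct is `ε`-torsion, then it is almost uniformly
`2ε`-torsion: there is `N` such that every `g` satisfies `‖g^m‖ < 2ε` for some `1 ≤ m ≤ N`. -/
theorem statement6 (𝒢 : PMFamily)
    (hmetric : ∀ n (g : 𝒢.G n), 𝒢.ν n g = 0 ↔ g = 1)
    (U : Ultrafilter ℕ) (hU : (U : Filter ℕ) ≤ Filter.cofinite)
    (hbdd : ∃ C : ℝ≥0∞, C ≠ ⊤ ∧ ∀ n (g : 𝒢.G n), 𝒢.ν n g ≤ C)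
    (ε : ℝ) (hε : 0 < ε)
    (htorsion : ∀ g : 𝒢.Q U, ∃ N : ℕ, 0 < N ∧ 𝒢.qnorm U (g ^ N) < ENNReal.ofReal ε) :
    ∃ N : ℕ, ∀ g : 𝒢.Q U, ∃ m : ℕ, 0 < m ∧ m ≤ N ∧
      𝒢.qnorm U (g ^ m) < ENNReal.ofReal (2 * ε) := by
  classical
  by_contra hcon
  push_neg at hcon
  -- hcon : ∀ N, ∃ g, ∀ m, 0 < m → m ≤ N → ofReal (2ε) ≤ qnorm (g ^ m)
  choose gbad hbad using hcon
  set h : ℕ → ∀ n, 𝒢.G n := fun N => Quotient.out (gbad N) with hh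
  have hmk : ∀ N, (QuotientGroup.mk (h N) : 𝒢.Q U) = gbad N := fun N => Quotient.out_eq _
  have hpn : ∀ N m, 0 < m → m ≤ N →
      ENNReal.ofReal (2 * ε) ≤ 𝒢.pnorm U ((h N) ^ m) := by
    intro N m h1 h2
    have heq : 𝒢.qnorm U (gbad N ^ m) = 𝒢.pnorm U ((h N) ^ m) := by
      rw [← hmk N, ← QuotientGroup.mk_pow, 𝒢.qnorm_mk U]
    rw [← heq]
    exact hbad N m h1 h2
  have hlt2 : ENNReal.ofReal ε < ENNReal.ofReal (2 * ε) := by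
    rw [ENNReal.ofReal_lt_ofReal_iff (by linarith)]
    linarith
  set S : ℕ → Set ℕ := fun N =>
    {n | N ≤ n ∧ ∀ m, 0 < m → m ≤ N → ENNReal.ofReal ε < 𝒢.ν n (h N n ^ m)} with hS
  have hSU : ∀ N, S N ∈ U := by
    intro N
    have h1 : {n | N ≤ n} ∈ U := hU (by rw [Nat.cofinite_eq_atTop]; exact Filter.mem_atTop N)
    have h2 : ∀ m ∈ Finset.Icc 1 N,
        {n | ENNReal.ofReal ε < 𝒢.ν n (h N n ^ m)} ∈ U := by
      intro m hm
      rw [Finset.mem_Icc] at hm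
      have hge := hpn N m hm.1 hm.2
      by_contra hne
      have hc : {n | ENNReal.ofReal ε < 𝒢.ν n (h N n ^ m)}ᶜ ∈ U :=
        Ultrafilter.compl_mem_iff_notMem.mpr hne
      have hev : ∀ᶠ n in (U : Filter ℕ), 𝒢.ν n ((h N ^ m) n) ≤ ENNReal.ofReal ε := by
        filter_upwards [hc] with n hn
        simp only [Set.mem_compl_iff, Set.mem_setOf_eq, not_lt] at hn
        simpa using hn
      have hle : 𝒢.pnorm U ((h N) ^ m) ≤ ENNReal.ofReal ε :=
        Filter.limsup_le_of_le (by isBoundedDefault) hev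
      exact absurd (hge.trans hle) (not_le.mpr hlt2)
    have hmem : {n | N ≤ n} ∩ ⋂ m ∈ Finset.Icc 1 N,
        {n | ENNReal.ofReal ε < 𝒢.ν n (h N n ^ m)} ∈ U :=
      Filter.inter_mem h1 ((Filter.biInter_finset_mem _).mpr h2)
    refine Filter.mem_of_superset hmem ?_
    rintro n ⟨hn1, hn2⟩
    refine ⟨hn1, fun m hm1 hm2 => ?_⟩
    have := Set.mem_iInter₂.mp hn2 m (Finset.mem_Icc.mpr ⟨hm1, hm2⟩)
    exact this
  set d : ℕ → ℕ := fun n => Nat.findGreatest (fun N => n ∈ S N) n with hd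
  set gd : ∀ n, 𝒢.G n := fun n => h (d n) n with hgd
  have hkey : ∀ m, 0 < m → S m ⊆ {n | ENNReal.ofReal ε < 𝒢.ν n (gd n ^ m)} := by
    intro m hm n hn
    have hmn : m ≤ n := hn.1
    have hdm : m ≤ d n := Nat.le_findGreatest (P := fun N => n ∈ S N) hmn hn
    have hspec : n ∈ S (d n) := Nat.findGreatest_spec (P := fun N => n ∈ S N) hmn hn
    exact hspec.2 m hm hdm
  have hpge : ∀ m, 0 < m → ENNReal.ofReal ε ≤ 𝒢.pnorm U (gd ^ m) := by
    intro m hm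
    refine Filter.le_limsup_of_frequently_le ?_ (by isBoundedDefault)
    have hmem : {n | ENNReal.ofReal ε < 𝒢.ν n (gd n ^ m)} ∈ U :=
      Filter.mem_of_superset (hSU m) (hkey m hm)
    have hev : ∀ᶠ n in (U : Filter ℕ), ENNReal.ofReal ε ≤ 𝒢.ν n ((gd ^ m) n) := by
      filter_upwards [hmem] with n hn
      exact hn.le
    exact hev.frequently
  obtain ⟨N, hN0, hNlt⟩ := htorsion (QuotientGroup.mk gd)
  have hge : ENNReal.ofReal ε ≤ 𝒢.qnorm U ((QuotientGroup.mk gd : 𝒢.Q U) ^ N) := by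
    rw [← QuotientGroup.mk_pow, 𝒢.qnorm_mk U]
    exact hpge N hN0
  exact absurd hNlt (not_lt.mpr hge)
end

section
/- Let 𝒢 = (G_n,‖·‖'_n)_{n∈ℕ} be a family of metric groups and (H,‖·‖) a metric group, and 𝒰 a nonprincipal ultrafilter on ℕ; assume 𝒢 and the constant family (H,‖·‖)_{n∈ℕ} satisfy Assumption (A). Suppose the metric ultraproduct 𝒢*_met,fin is a simple group. Assume the following approximation property: for every t > 0, every ε > 0, and all h₁,h₂ ∈ H with ‖h₁‖,‖h₂‖ ≤ t, for 𝒰-many n ∈ ℕ there exist g₁,g₂ ∈ G_n and a group homomorphism φ_n : G_n → H which is isometric (‖φ_n(g)‖ = ‖g‖'_n for all g ∈ G_n) and satisfies ‖φ_n(g_i)·h_i⁻¹‖ < ε for i = 1,2. Then the finitary metric ultrapower H*_met,fin of H with respect to 𝒰 is a simple group. -/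
open Filter Set Pointwise ENNReal

/-!
A finitary ultraproduct is simple exactly when every bounded sequence is, along `U`, a product of
boundedly many conjugates, by boundedly large conjugators, of any fixed non-infinitesimal bounded
sequence and its inverse. For the ultrapower of `H` the point is the uniformity of these bounds.
If it failed for a pair `a, b`, a diagonal choice of indices would give, for every `k`, a pair in
`H` defeating the bounds `(j, j)` for all `j ≤ k`. The approximation property lifts these pairs
to a non-infinitesimal pair in `𝒢*_met,fin`, where simplicity supplies bounds `N, C`; pushing that
witness back through the isometric homomorphisms contradicts the choice once `k ≥ max N C`.
With uniform bounds, approximate witnesses for `b` glue to an exact one.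
-/

open Topology

lemma Filter.exists_tendsto_atTop_eventually_diag {l : Filter ℕ} (hl : l ≤ cofinite)
    {p : ℕ → ℕ → Prop} (hp : ∀ k, ∀ᶠ m in l, p k m) :
    ∃ κ : ℕ → ℕ, Tendsto κ l atTop ∧ ∀ᶠ m in l, p (κ m) m := by
  classical
  have hle : ∀ k, ∀ᶠ m in l, ∀ j ≤ k, p j m := fun k =>
    (eventually_all_finite (Set.finite_Iic k)).2 fun j _ => hp j
  refine ⟨fun m => Nat.findGreatest (fun k => ∀ j ≤ k, p j m) m, ?_, ?_⟩
  · refine tendsto_atTop.2 fun k => ?_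
    filter_upwards [hle k, hl (Nat.cofinite_eq_atTop ▸ eventually_ge_atTop k)] with m hm hkm
    exact Nat.le_findGreatest hkm hm
  · filter_upwards [hle 0] with m hm
    exact Nat.findGreatest_spec (P := fun k => ∀ j ≤ k, p j m) (Nat.zero_le m) hm _ le_rfl

structure IsConjInvSeminorm {G : Type*} [Group G] (ν : G → ℝ≥0∞) : Prop where
  map_one : ν 1 = 0
  map_mul_le : ∀ a b, ν (a * b) ≤ ν a + ν b
  map_inv : ∀ a, ν a⁻¹ = ν a
  map_conj : ∀ a b, ν (b * a * b⁻¹) = ν a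

namespace IsConjInvSeminorm

variable {G : Type*} [Group G] {ν : G → ℝ≥0∞}

lemma map_mul_inv_comm (hν : IsConjInvSeminorm ν) (a b : G) : ν (a * b⁻¹) = ν (b * a⁻¹) := by
  rw [← hν.map_inv, mul_inv_rev, inv_inv]

lemma map_inv_mul (hν : IsConjInvSeminorm ν) (a b : G) : ν (a⁻¹ * b) = ν (a * b⁻¹) := by
  rw [← hν.map_conj (a⁻¹ * b) a, hν.map_mul_inv_comm]
  group

lemma map_mul_inv_le (hν : IsConjInvSeminorm ν) (a b c : G) :
    ν (a * c⁻¹) ≤ ν (a * b⁻¹) + ν (b * c⁻¹) := by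
  simpa using hν.map_mul_le (a * b⁻¹) (b * c⁻¹)

lemma le_map_mul_inv_add (hν : IsConjInvSeminorm ν) (a b : G) : ν a ≤ ν (a * b⁻¹) + ν b := by
  simpa using hν.map_mul_le (a * b⁻¹) b

end IsConjInvSeminorm

section BoundedConjugates

variable {G H : Type*} [Group G] [Group H]

/-- Since it contains `1`, `boundedConjugates ν C g ^ N` is the set of products of at most `N`
conjugates of `g` or `g⁻¹` by elements of norm at most `C`. -/
def boundedConjugates (ν : G → ℝ≥0∞) (C : ℝ≥0∞) (g : G) : Set G :=
  {w | ∃ k, ν k ≤ C ∧ ∃ c ∈ ({1, g, g⁻¹} : Set G), w = k * c * k⁻¹}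

variable {ν : G → ℝ≥0∞} {ν' : H → ℝ≥0∞} {C C' : ℝ≥0∞} {g : G}

lemma one_mem_boundedConjugates (hν : IsConjInvSeminorm ν) : (1 : G) ∈ boundedConjugates ν C g :=
  ⟨1, by simp [hν.map_one], 1, by simp, by simp⟩

lemma boundedConjugates_mono (hC : C ≤ C') : boundedConjugates ν C g ⊆ boundedConjugates ν C' g :=
  fun _ ⟨k, hk, c, hc, hw⟩ => ⟨k, hk.trans hC, c, hc, hw⟩

lemma boundedConjugates_pow_mono (hν : IsConjInvSeminorm ν) {N N' : ℕ} (hC : C ≤ C')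
    (hN : N ≤ N') : boundedConjugates ν C g ^ N ⊆ boundedConjugates ν C' g ^ N' :=
  Set.pow_subset_pow (boundedConjugates_mono hC) (one_mem_boundedConjugates hν) hN

lemma inv_mem_boundedConjugates_pow {N : ℕ} {w : G} (hw : w ∈ boundedConjugates ν C g ^ N) :
    w⁻¹ ∈ boundedConjugates ν C g ^ N := by
  have hsub : boundedConjugates ν C g ⊆ (boundedConjugates ν C g)⁻¹ := by
    rintro _ ⟨k, hk, c, hc, rfl⟩
    refine ⟨k, hk, c⁻¹, ?_, by group⟩
    rcases hc with rfl | rfl | rfl <;> simp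
  have := Set.pow_subset_pow_left hsub hw
  rwa [inv_pow, Set.mem_inv] at this

lemma image_boundedConjugates_pow_subset (φ : G →* H)
    (hφ : ∀ a, ν' (φ a) = ν a) (N : ℕ) :
    φ '' (boundedConjugates ν C g ^ N) ⊆ boundedConjugates ν' C (φ g) ^ N := by
  rw [Set.image_pow]
  refine Set.pow_subset_pow_left ?_
  rintro _ ⟨_, ⟨k, hk, c, hc, rfl⟩, rfl⟩
  refine ⟨φ k, (hφ k).trans_le hk, φ c, ?_, by simp⟩
  rcases hc with rfl | rfl | rfl <;> simp

lemma exists_mem_boundedConjugates_pow_near (hν : IsConjInvSeminorm ν) (g' : G) :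
    ∀ {N : ℕ} {w : G}, w ∈ boundedConjugates ν C g ^ N →
      ∃ w' ∈ boundedConjugates ν C g' ^ N, ν (w * w'⁻¹) ≤ N * ν (g * g'⁻¹)
  | 0, w, hw => ⟨1, by simp, by simp_all [hν.map_one]⟩
  | N + 1, _, hw => by
    obtain ⟨u, hu, _, ⟨k, hk, c, hc, rfl⟩, rfl⟩ := (pow_succ (boundedConjugates ν C g) N) ▸ hw
    obtain ⟨u', hu', hu'd⟩ := exists_mem_boundedConjugates_pow_near hν g' hu
    have : ∃ c' ∈ ({1, g', g'⁻¹} : Set G), ν (c * c'⁻¹) ≤ ν (g * g'⁻¹) := by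
      rcases hc with rfl | rfl | rfl
      · exact ⟨1, by simp, by simp [hν.map_one]⟩
      · exact ⟨g', by simp, le_rfl⟩
      · exact ⟨g'⁻¹, by simp, by rw [inv_inv, ← hν.map_inv_mul]⟩
    obtain ⟨c', hc', hcc'⟩ := this
    refine ⟨u' * (k * c' * k⁻¹), (pow_succ (boundedConjugates ν C g') N) ▸
      Set.mul_mem_mul hu' ⟨k, hk, c', hc', rfl⟩, ?_⟩
    have hsplit : u * (k * c * k⁻¹) * (u' * (k * c' * k⁻¹))⁻¹ =
        (u * k) * (c * c'⁻¹) * (u * k)⁻¹ * (u * u'⁻¹) := by group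
    calc ν (u * (k * c * k⁻¹) * (u' * (k * c' * k⁻¹))⁻¹)
        ≤ ν (c * c'⁻¹) + ν (u * u'⁻¹) := by
          rw [hsplit]; exact (hν.map_mul_le _ _).trans_eq (by rw [hν.map_conj])
      _ ≤ ν (g * g'⁻¹) + N * ν (g * g'⁻¹) := add_le_add hcc' hu'd
      _ = (N + 1 : ℕ) * ν (g * g'⁻¹) := by push_cast; ring

lemma exists_mem_boundedConjugates_pow_near_of_isometry (hν' : IsConjInvSeminorm ν')
    (φ : G →* H) (hφ : ∀ a, ν' (φ a) = ν a) {e : ℝ≥0∞} {N : ℕ} {y w : G} {α β : H}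
    (hw : w ∈ boundedConjugates ν C g ^ N) (hα : ν' (φ g * α⁻¹) ≤ e) (hβ : ν' (φ y * β⁻¹) ≤ e) :
    ∃ w' ∈ boundedConjugates ν' C α ^ N, ν' (β * w'⁻¹) ≤ ν (y * w⁻¹) + (N + 1) * e := by
  obtain ⟨w', hw', hww'⟩ := exists_mem_boundedConjugates_pow_near hν' α
    (image_boundedConjugates_pow_subset φ hφ N ⟨w, hw, rfl⟩)
  refine ⟨w', hw', ?_⟩
  calc ν' (β * w'⁻¹)
      ≤ ν' (β * (φ y)⁻¹) + (ν' (φ y * (φ w)⁻¹) + ν' (φ w * w'⁻¹)) :=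
        (hν'.map_mul_inv_le _ _ _).trans (add_le_add_right (hν'.map_mul_inv_le _ _ _) _)
    _ ≤ e + (ν (y * w⁻¹) + N * e) := by
        rw [hν'.map_mul_inv_comm, ← map_inv, ← map_mul, hφ]
        gcongr
        exact hww'.trans (by gcongr)
    _ = ν (y * w⁻¹) + (N + 1) * e := by ring

end BoundedConjugates

namespace PMFamily

variable {𝒢 : PMFamily} {U : Ultrafilter ℕ}

variable (𝒢) in
lemma isConjInvSeminorm (n : ℕ) : IsConjInvSeminorm (𝒢.ν n) :=
  ⟨𝒢.norm_one n, 𝒢.norm_mul n, 𝒢.norm_inv n, 𝒢.norm_conj n⟩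

lemma coe_eq_coe_iff {g h : ∀ n, 𝒢.G n} :
    (g : 𝒢.Q U) = h ↔ ∀ ε > 0, ∀ᶠ n in U, 𝒢.ν n (g n * (h n)⁻¹) < ε := by
  rw [QuotientGroup.eq, mem_E]
  simp only [Pi.mul_apply, Pi.inv_apply, (𝒢.isConjInvSeminorm _).map_inv_mul]
  rfl

lemma coe_eq_coe_of_eventuallyEq {g h : ∀ n, 𝒢.G n} (hgh : ∀ᶠ n in U, g n = h n) :
    (g : 𝒢.Q U) = h :=
  coe_eq_coe_iff.2 fun ε hε => hgh.mono fun n hn => by simpa [hn, 𝒢.norm_one] using hε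

lemma coe_ne_one_iff {g : ∀ n, 𝒢.G n} :
    (g : 𝒢.Q U) ≠ 1 ↔ ∃ s > 0, ∀ᶠ n in U, s ≤ 𝒢.ν n (g n) := by
  rw [Ne, QuotientGroup.eq_one_iff, mem_E]
  simp only [not_forall, exists_prop, ← not_lt]
  exact exists_congr fun s => and_congr_right fun _ => Ultrafilter.eventually_not.symm

lemma coe_mem_finSubgroup {g : ∀ n, 𝒢.G n} {C : ℝ≥0∞} (hC : C ≠ ⊤)
    (hg : ∀ᶠ n in U, 𝒢.ν n (g n) ≤ C) : (g : 𝒢.Q U) ∈ 𝒢.finSubgroup U := by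
  classical
  refine ⟨fun n => if 𝒢.ν n (g n) ≤ C then g n else 1,
    coe_eq_coe_of_eventuallyEq (hg.mono fun n hn => if_pos hn), C, hC, fun n => ?_⟩
  dsimp only
  split_ifs with hn
  · exact hn
  · simp [𝒢.norm_one]

lemma exists_boundedConjugates_pow_of_mem_normalClosure {x y : 𝒢.finSubgroup U}
    {a : ∀ n, 𝒢.G n} (ha : (a : 𝒢.Q U) = x) (hy : y ∈ Subgroup.normalClosure {x}) :
    ∃ (N C : ℕ) (w : ∀ n, 𝒢.G n), (w : 𝒢.Q U) = y ∧
      ∀ n, w n ∈ boundedConjugates (𝒢.ν n) C (a n) ^ N := by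
  induction hy using Subgroup.closure_induction with
  | mem f hf =>
    obtain ⟨_, rfl, hconj⟩ := Group.mem_conjugatesOfSet_iff.1 hf
    obtain ⟨c, rfl⟩ := isConj_iff.1 hconj
    obtain ⟨ζ, hζ, Cζ, hCζ, hζC⟩ := c.2
    obtain ⟨C, hC⟩ := ENNReal.exists_nat_gt hCζ
    refine ⟨1, C, ζ * a * ζ⁻¹, by simp [hζ, ha], fun n => ?_⟩
    rw [pow_one]
    exact ⟨ζ n, (hζC n).trans hC.le, a n, by simp, rfl⟩
  | one => exact ⟨0, 0, 1, by simp, fun n => by simp⟩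
  | mul y₁ y₂ _ _ ih₁ ih₂ =>
    obtain ⟨N₁, C₁, w₁, hw₁, hw₁N⟩ := ih₁
    obtain ⟨N₂, C₂, w₂, hw₂, hw₂N⟩ := ih₂
    refine ⟨N₁ + N₂, max C₁ C₂, w₁ * w₂, by simp [hw₁, hw₂], fun n => ?_⟩
    rw [pow_add]
    exact Set.mul_mem_mul
      (boundedConjugates_pow_mono (𝒢.isConjInvSeminorm n) (by simp) le_rfl (hw₁N n))
      (boundedConjugates_pow_mono (𝒢.isConjInvSeminorm n) (by simp) le_rfl (hw₂N n))
  | inv y _ ih =>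
    obtain ⟨N, C, w, hw, hwN⟩ := ih
    exact ⟨N, C, w⁻¹, by simp [hw], fun n => inv_mem_boundedConjugates_pow (hwN n)⟩

section NormalSubgroup

variable {𝒩 : Subgroup (𝒢.finSubgroup U)} {x : 𝒢.finSubgroup U} {a : ∀ n, 𝒢.G n}

lemma exists_mem_coe_eq_of_eventually_mem (hx : x ∈ 𝒩) (ha : (a : 𝒢.Q U) = x)
    {c : ∀ n, 𝒢.G n} (hc : ∀ᶠ n in U, c n ∈ ({1, a n, (a n)⁻¹} : Set (𝒢.G n))) :
    ∃ z ∈ 𝒩, (c : 𝒢.Q U) = z := by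
  simp only [Set.mem_insert_iff, Set.mem_singleton_iff, Ultrafilter.eventually_or] at hc
  rcases hc with h | h | h
  · exact ⟨1, 𝒩.one_mem, (coe_eq_coe_of_eventuallyEq (h := 1) h).trans (by simp)⟩
  · exact ⟨x, hx, (coe_eq_coe_of_eventuallyEq h).trans ha⟩
  · refine ⟨x⁻¹, 𝒩.inv_mem hx, ?_⟩
    rw [coe_eq_coe_of_eventuallyEq (h := a⁻¹) h]
    simp [ha]

lemma mem_of_eventually_mem_boundedConjugates_pow (h𝒩 : 𝒩.Normal) (hx : x ∈ 𝒩)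
    (ha : (a : 𝒢.Q U) = x) {C : ℝ≥0∞} (hC : C ≠ ⊤) :
    ∀ {N : ℕ} {y : 𝒢.finSubgroup U} {w : ∀ n, 𝒢.G n}, (w : 𝒢.Q U) = y →
      (∀ᶠ n in U, w n ∈ boundedConjugates (𝒢.ν n) C (a n) ^ N) → y ∈ 𝒩
  | 0, y, w, hw, hwN => by
    have : (y : 𝒢.Q U) = 1 := by
      rw [← hw]; simpa using coe_eq_coe_of_eventuallyEq (h := 1) (by simpa using hwN)
    rw [show y = 1 by exact_mod_cast this]
    exact 𝒩.one_mem
  | N + 1, y, w, hw, hwN => by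
    simp only [pow_succ', Set.mem_mul] at hwN
    obtain ⟨f, hf⟩ := Filter.skolem.1 hwN
    obtain ⟨u, hu⟩ := Filter.skolem.1 (hf.mono fun n h => h.2)
    obtain ⟨k, hk⟩ := Filter.skolem.1 (hf.mono fun n h => h.1)
    obtain ⟨c, hc⟩ := Filter.skolem.1 (hk.mono fun n h => h.2)
    obtain ⟨z, hz, hcz⟩ := exists_mem_coe_eq_of_eventually_mem hx ha (hc.mono fun n h => h.1)
    let K : 𝒢.finSubgroup U := ⟨k, coe_mem_finSubgroup hC (hk.mono fun n h => h.1)⟩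
    have hconj : K * z * K⁻¹ ∈ 𝒩 := h𝒩.conj_mem z hz K
    suffices (K * z * K⁻¹)⁻¹ * y ∈ 𝒩 by
      simpa only [mul_inv_cancel_left] using 𝒩.mul_mem hconj this
    refine mem_of_eventually_mem_boundedConjugates_pow h𝒩 hx ha hC (w := u) ?_
      (hu.mono fun n h => h.1)
    rw [coe_eq_coe_of_eventuallyEq (h := (k * c * k⁻¹)⁻¹ * w) ?_]
    · simp [hw, hcz, K]
    · filter_upwards [hu, hc] with n hun hcn
      simp only [Pi.mul_apply, Pi.inv_apply]
      rw [← hun.2, hcn.2]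
      group

end NormalSubgroup

lemma exists_coe_eq_of_forall_approx (hU : (U : Filter ℕ) ≤ cofinite) {b : ∀ n, 𝒢.G n}
    {T : ∀ n, Set (𝒢.G n)} (h : ∀ γ > 0, ∀ᶠ n in U, ∃ w ∈ T n, 𝒢.ν n (b n * w⁻¹) < γ) :
    ∃ w : ∀ n, 𝒢.G n, (∀ᶠ n in U, w n ∈ T n) ∧ (w : 𝒢.Q U) = b := by
  obtain ⟨κ, hκ, hκw⟩ :=
    exists_tendsto_atTop_eventually_diag hU fun k => h (k : ℝ≥0∞)⁻¹ (by simp)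
  obtain ⟨w, hw⟩ := Filter.skolem.1 hκw
  refine ⟨w, hw.mono fun n h => h.1, (coe_eq_coe_iff.2 fun ε hε => ?_).symm⟩
  filter_upwards [hw, (ENNReal.tendsto_inv_nat_nhds_zero.comp hκ).eventually_lt_const hε]
    with n hn hκn
  exact hn.2.trans hκn

lemma exists_boundedConjugates_pow_of_isSimpleGroup (hsimple : IsSimpleGroup (𝒢.finSubgroup U))
    {x y : ∀ n, 𝒢.G n} (hx : (x : 𝒢.Q U) ∈ 𝒢.finSubgroup U) (hy : (y : 𝒢.Q U) ∈ 𝒢.finSubgroup U)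
    (hx1 : (x : 𝒢.Q U) ≠ 1) :
    ∃ (N C : ℕ) (w : ∀ n, 𝒢.G n), (w : 𝒢.Q U) = y ∧
      ∀ n, w n ∈ boundedConjugates (𝒢.ν n) C (x n) ^ N := by
  have htop : Subgroup.normalClosure {(⟨x, hx⟩ : 𝒢.finSubgroup U)} = ⊤ :=
    (hsimple.eq_bot_or_eq_top_of_normal _ Subgroup.normalClosure_normal).resolve_left <| by
      rw [Subgroup.normalClosure_eq_bot_iff, Set.singleton_subset_singleton]
      exact fun h => hx1 (congrArg Subtype.val h)
  exact exists_boundedConjugates_pow_of_mem_normalClosure (y := ⟨y, hy⟩) rfl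
    (htop ▸ Subgroup.mem_top _)

section ConstantFamily

variable {H : Type} [Group H] {ν : H → ℝ≥0∞}

variable (H) in
def const (hν : IsConjInvSeminorm ν) : PMFamily :=
  ⟨fun _ => H, fun _ => inferInstance, fun _ => ν, fun _ => hν.map_one, fun _ => hν.map_mul_le,
    fun _ => hν.map_inv, fun _ => hν.map_conj⟩

variable (𝒢 U ν) in
/-- The approximation property of the theorem, with the bounds `t` and `ε` taken in `ℝ≥0∞`. -/
def Approximates : Prop :=
  ∀ S : ℝ≥0∞, S ≠ ⊤ → ∀ ε : ℝ≥0∞, 0 < ε → ∀ h₁ h₂ : H, ν h₁ ≤ S → ν h₂ ≤ S →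
    ∀ᶠ m in U, ∃ (g₁ g₂ : 𝒢.G m) (φ : 𝒢.G m →* H), (∀ g, ν (φ g) = 𝒢.ν m g) ∧
      ν (φ g₁ * h₁⁻¹) < ε ∧ ν (φ g₂ * h₂⁻¹) < ε

lemma Approximates.of_real
    (h : ∀ t ε : ℝ, 0 < t → 0 < ε → ∀ h₁ h₂ : H,
      ν h₁ ≤ ENNReal.ofReal t → ν h₂ ≤ ENNReal.ofReal t →
      {n | ∃ (g₁ g₂ : 𝒢.G n) (φ : 𝒢.G n →* H), (∀ g : 𝒢.G n, ν (φ g) = 𝒢.ν n g) ∧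
        ν (φ g₁ * h₁⁻¹) < ENNReal.ofReal ε ∧ ν (φ g₂ * h₂⁻¹) < ENNReal.ofReal ε} ∈ U) :
    𝒢.Approximates U ν := by
  intro S hS ε hε h₁ h₂ hh₁ hh₂
  obtain ⟨r, -, hr, hrε⟩ := ENNReal.lt_iff_exists_real_btwn.1 hε
  have hSt : S ≤ ENNReal.ofReal (S.toReal + 1) :=
    (ENNReal.le_ofReal_iff_toReal_le hS (by positivity)).2 (by linarith)
  refine Filter.Eventually.mono (h _ r (by positivity) (ENNReal.ofReal_pos.1 hr) h₁ h₂
    (hh₁.trans hSt) (hh₂.trans hSt)) ?_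
  rintro m ⟨g₁, g₂, φ, hφ, hg₁, hg₂⟩
  exact ⟨g₁, g₂, φ, hφ, hg₁.trans hrε, hg₂.trans hrε⟩

lemma Approximates.exists_lift (happrox : 𝒢.Approximates U ν) (hU : (U : Filter ℕ) ≤ cofinite)
    (hν : IsConjInvSeminorm ν) {α β : ℕ → H} {S : ℝ≥0∞} (hS : S ≠ ⊤) (hα : ∀ k, ν (α k) ≤ S)
    (hβ : ∀ k, ν (β k) ≤ S) :
    ∃ κ : ℕ → ℕ, Tendsto κ U atTop ∧ ∃ (g₁ g₂ : ∀ m, 𝒢.G m) (φ : ∀ m, 𝒢.G m →* H),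
      (g₁ : 𝒢.Q U) ∈ 𝒢.finSubgroup U ∧ (g₂ : 𝒢.Q U) ∈ 𝒢.finSubgroup U ∧
      ∀ᶠ m in U, (∀ g, ν (φ m g) = 𝒢.ν m g) ∧
        ν (φ m (g₁ m) * (α (κ m))⁻¹) < (κ m : ℝ≥0∞)⁻¹ ∧
        ν (φ m (g₂ m) * (β (κ m))⁻¹) < (κ m : ℝ≥0∞)⁻¹ := by
  obtain ⟨κ, hκ, hlift⟩ := exists_tendsto_atTop_eventually_diag hU fun k =>
    happrox S hS (k : ℝ≥0∞)⁻¹ (by simp) (α k) (β k) (hα k) (hβ k)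
  obtain ⟨g₁, hlift⟩ := Filter.skolem.1 hlift
  obtain ⟨g₂, hlift⟩ := Filter.skolem.1 hlift
  obtain ⟨φ, hlift⟩ := Filter.skolem.1 hlift
  have hsmall := (ENNReal.tendsto_inv_nat_nhds_zero.comp hκ).eventually_lt_const one_pos
  have hbound : ∀ (g : ∀ m, 𝒢.G m) (γ : ℕ → H), (∀ k, ν (γ k) ≤ S) →
      (∀ᶠ m in U, ν (φ m (g m)) = 𝒢.ν m (g m) ∧ ν (φ m (g m) * (γ (κ m))⁻¹) < (κ m : ℝ≥0∞)⁻¹) →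
      (g : 𝒢.Q U) ∈ 𝒢.finSubgroup U := fun g γ hγ hg =>
    coe_mem_finSubgroup (C := 1 + S) (by simpa using hS) <| by
      filter_upwards [hg, hsmall] with m hm hm1
      rw [← hm.1]
      exact (hν.le_map_mul_inv_add _ (γ (κ m))).trans (add_le_add (hm.2.trans hm1).le (hγ _))
  refine ⟨κ, hκ, g₁, g₂, φ, hbound g₁ α hα (hlift.mono fun m h => ⟨h.1 _, h.2.1⟩),
    hbound g₂ β hβ (hlift.mono fun m h => ⟨h.1 _, h.2.2⟩), hlift⟩

theorem exists_approx_boundedConjugates_pow (hν : IsConjInvSeminorm ν)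
    (hU : (U : Filter ℕ) ≤ cofinite) (hsimple : IsSimpleGroup (𝒢.finSubgroup U))
    (happrox : 𝒢.Approximates U ν) {a b : ℕ → H} {S s : ℝ≥0∞} (hS : S ≠ ⊤)
    (ha : ∀ n, ν (a n) ≤ S) (hb : ∀ n, ν (b n) ≤ S) (hs : 0 < s)
    (hsa : ∀ᶠ n in U, s ≤ ν (a n)) :
    ∃ N C : ℕ, ∀ γ > 0, ∀ᶠ n in U, ∃ w ∈ boundedConjugates ν C (a n) ^ N, ν (b n * w⁻¹) < γ := by
  by_contra! hfar
  choose γ hγ hfar using fun j : ℕ => hfar j j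
  choose n hn_low hn_far using fun k =>
    (hsa.and ((eventually_all_finite (Set.finite_Iic k)).2 fun j (_ : j ≤ k) => hfar j)).exists
  obtain ⟨κ, hκ, g₁, g₂, φ, hg₁, hg₂, hlift⟩ :=
    happrox.exists_lift hU hν hS (fun k => ha (n k)) (fun k => hb (n k))
  have he := ENNReal.tendsto_inv_nat_nhds_zero.comp hκ
  have hg₁1 : (g₁ : 𝒢.Q U) ≠ 1 := by
    have hs2 := ENNReal.half_pos hs.ne'
    refine coe_ne_one_iff.2 ⟨s / 2, hs2, ?_⟩
    filter_upwards [hlift, he.eventually_lt_const hs2] with m hm hem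
    refine le_of_not_gt fun hlt => ((hn_low (κ m)).trans ?_).not_gt (ENNReal.add_halves s ▸
      ENNReal.add_lt_add (hm.2.1.trans hem) hlt)
    exact (hν.le_map_mul_inv_add _ (φ m (g₁ m))).trans_eq (by rw [hν.map_mul_inv_comm, hm.1])
  obtain ⟨N, C, w, hw, hwN⟩ := exists_boundedConjugates_pow_of_isSimpleGroup hsimple hg₁ hg₂ hg₁1
  set j := max N C
  have hγ2 := ENNReal.half_pos (hγ j).ne'
  have hNe : Tendsto (fun m => ((N : ℝ≥0∞) + 1) * (κ m : ℝ≥0∞)⁻¹) U (𝓝 0) := by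
    simpa using ENNReal.Tendsto.const_mul (a := (N : ℝ≥0∞) + 1) he (Or.inr (by simp))
  obtain ⟨m, hjm, hm, hem, hwm⟩ := (hκ.eventually_ge_atTop j |>.and <| hlift.and <|
    (hNe.eventually_lt_const hγ2).and (coe_eq_coe_iff.1 hw.symm _ hγ2)).exists
  obtain ⟨w', hw', hw'b⟩ := exists_mem_boundedConjugates_pow_near_of_isometry hν (φ m) hm.1
    (hwN m) hm.2.1.le hm.2.2.le
  have hfar' := hn_far (κ m) j hjm w'
    (boundedConjugates_pow_mono hν (by simp [j]) (by simp [j]) hw')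
  exact (hfar'.trans hw'b).not_gt (ENNReal.add_halves (γ j) ▸ ENNReal.add_lt_add hwm hem)

lemma nontrivial_finSubgroup_const (hν : IsConjInvSeminorm ν) (happrox : 𝒢.Approximates U ν)
    [Nontrivial (𝒢.finSubgroup U)] : Nontrivial ((const H hν).finSubgroup U) := by
  obtain ⟨⟨_, g, rfl, C, hC, hgC⟩, hg1⟩ := exists_ne (1 : 𝒢.finSubgroup U)
  obtain ⟨s, hs, hsg⟩ := coe_ne_one_iff.1 fun h => hg1 (Subtype.ext h)
  obtain ⟨φ, hφ⟩ := Filter.skolem.1 <|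
    (happrox 0 (by simp) 1 one_pos 1 1 (by simp [hν.map_one]) (by simp [hν.map_one])).mono
      fun m ⟨_, _, φ, hφ, _⟩ => ⟨φ, hφ⟩
  let b : ∀ m, (const H hν).G m := fun m => φ m (g m)
  refine ⟨⟨b, coe_mem_finSubgroup hC (hφ.mono fun m h => (h _).trans_le (hgC m))⟩, 1,
    fun h => coe_ne_one_iff.2 ⟨s, hs, ?_⟩ (congrArg Subtype.val h)⟩
  filter_upwards [hφ, hsg] with m hφm hsm
  exact hsm.trans_eq (hφm _).symm

theorem isSimpleGroup_finSubgroup_const (hν : IsConjInvSeminorm ν)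
    (hU : (U : Filter ℕ) ≤ cofinite) [hsimple : IsSimpleGroup (𝒢.finSubgroup U)]
    (happrox : 𝒢.Approximates U ν) : IsSimpleGroup ((const H hν).finSubgroup U) := by
  have := nontrivial_finSubgroup_const hν happrox
  refine ⟨fun 𝒩 h𝒩 => or_iff_not_imp_left.2 fun hbot => eq_top_iff.2 fun y _ => ?_⟩
  obtain ⟨x, hx𝒩, hx1⟩ : ∃ x ∈ 𝒩, x ≠ 1 := by simpa [Subgroup.eq_bot_iff_forall] using hbot
  obtain ⟨a, ha, Sa, hSa, haS⟩ := x.2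
  obtain ⟨b, hb, Sb, hSb, hbS⟩ := y.2
  obtain ⟨s, hs, hsa⟩ := coe_ne_one_iff.1 (ha ▸ fun h => hx1 (Subtype.ext h))
  obtain ⟨N, C, happ⟩ := exists_approx_boundedConjugates_pow hν hU hsimple happrox
    (ENNReal.add_ne_top.2 ⟨hSa, hSb⟩) (fun n => (haS n).trans le_self_add)
    (fun n => (hbS n).trans le_add_self) hs hsa
  obtain ⟨w, hwN, hw⟩ := exists_coe_eq_of_forall_approx (𝒢 := const H hν)
    (T := fun n => boundedConjugates ν C (a n) ^ N) hU happ
  exact mem_of_eventually_mem_boundedConjugates_pow h𝒩 hx𝒩 ha (ENNReal.natCast_ne_top C)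
    (hw.trans hb) hwN

end ConstantFamily

end PMFamily

theorem statement11_general (𝒢 : PMFamily)
    (H : Type) [Group H] (νH : H → ℝ≥0∞)
    (h1 : νH 1 = 0) (hm : ∀ g h : H, νH (g * h) ≤ νH g + νH h)
    (hi : ∀ g : H, νH g⁻¹ = νH g) (hc : ∀ g h : H, νH (h * g * h⁻¹) = νH g)
    (U : Ultrafilter ℕ) (hU : (U : Filter ℕ) ≤ Filter.cofinite)
    -- 𝒢*_met,fin is simple
    (hsimple : IsSimpleGroup ↥(𝒢.finSubgroup U))
    -- the approximation property
    (happrox : ∀ t ε : ℝ, 0 < t → 0 < ε → ∀ h₁ h₂ : H,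
      νH h₁ ≤ ENNReal.ofReal t → νH h₂ ≤ ENNReal.ofReal t →
      {n | ∃ (g₁ g₂ : 𝒢.G n) (φ : 𝒢.G n →* H), (∀ g : 𝒢.G n, νH (φ g) = 𝒢.ν n g) ∧
        νH (φ g₁ * h₁⁻¹) < ENNReal.ofReal ε ∧ νH (φ g₂ * h₂⁻¹) < ENNReal.ofReal ε} ∈ U) :
    let ℋ : PMFamily :=
      ⟨fun _ => H, fun _ => inferInstance, fun _ => νH,
        fun _ => h1, fun _ => hm, fun _ => hi, fun _ => hc⟩
    IsSimpleGroup ↥(ℋ.finSubgroup U) :=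
  PMFamily.isSimpleGroup_finSubgroup_const ⟨h1, hm, hi, hc⟩ hU
    (PMFamily.Approximates.of_real happrox)

/-- simplicity via approximation. If the metric ultraproduct
`𝒢*_met,fin` is simple and the metric group `(H,νH)` is approximated by the family `𝒢`
in the sense below, then the finitary metric ultrapower of `H` is simple as well
(both families are assumed to satisfy Assumption (A)). -/
theorem statement11 (𝒢 : PMFamily)
    (hmetric : ∀ n (g : 𝒢.G n), 𝒢.ν n g = 0 ↔ g = 1)
    (H : Type) [Group H] (νH : H → ℝ≥0∞)
    (h1 : νH 1 = 0) (hm : ∀ g h : H, νH (g * h) ≤ νH g + νH h)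
    (hi : ∀ g : H, νH g⁻¹ = νH g) (hc : ∀ g h : H, νH (h * g * h⁻¹) = νH g)
    (hz : ∀ g : H, νH g = 0 ↔ g = 1)
    (U : Ultrafilter ℕ) (hU : (U : Filter ℕ) ≤ Filter.cofinite)
    -- Assumption (A) for 𝒢
    (F : ℝ≥0∞ → ℝ≥0∞) (hFmono : Monotone F) (hFpos : ∀ x, 0 < F x)
    (hA : ∀ n (g : 𝒢.G n), {x | IsConj g x} =
      {x | ∃ h : 𝒢.G n, 𝒢.ν n h < F (𝒢.ν n g) ∧ x = h⁻¹ * g * h})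
    -- Assumption (A) for the constant family on H
    (F' : ℝ≥0∞ → ℝ≥0∞) (hF'mono : Monotone F') (hF'pos : ∀ x, 0 < F' x)
    (hAH : ∀ g : H, {x | IsConj g x} =
      {x | ∃ h : H, νH h < F' (νH g) ∧ x = h⁻¹ * g * h})
    -- 𝒢*_met,fin is simple
    (hsimple : IsSimpleGroup ↥(𝒢.finSubgroup U))
    -- the approximation property
    (happrox : ∀ t ε : ℝ, 0 < t → 0 < ε → ∀ h₁ h₂ : H,
      νH h₁ ≤ ENNReal.ofReal t → νH h₂ ≤ ENNReal.ofReal t →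
      {n | ∃ (g₁ g₂ : 𝒢.G n) (φ : 𝒢.G n →* H), (∀ g : 𝒢.G n, νH (φ g) = 𝒢.ν n g) ∧
        νH (φ g₁ * h₁⁻¹) < ENNReal.ofReal ε ∧ νH (φ g₂ * h₂⁻¹) < ENNReal.ofReal ε} ∈ U) :
    let ℋ : PMFamily :=
      ⟨fun _ => H, fun _ => inferInstance, fun _ => νH,
        fun _ => h1, fun _ => hm, fun _ => hi, fun _ => hc⟩
    IsSimpleGroup ↥(ℋ.finSubgroup U) :=
  statement11_general 𝒢 H νH h1 hm hi hc U hU hsimple happrox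
end

section
/- Let (G_n)_{n∈ℕ} be a family of nontrivial groups with the (⋆)-property and 𝒰 a nonprincipal ultrafilter on ℕ. Then Z_𝒰 is a normal subgroup of ∏_{n∈ℕ} G_n, and the quotient group (∏_{n∈ℕ} G_n)/Z_𝒰 is a nontrivial boundedly simple group. -/
open Filter Set Pointwise ENNReal

/-- `Ng g = min {n : C_n(g,G) = G}` (and `⊤` if there is no such `n`). -/
noncomputable def Ng {H : Type*} [Group H] (g : H) : ℕ∞ :=
  sInf {x : ℕ∞ | ∃ m : ℕ, x = m ∧ CN m g = Set.univ}

/-- The `(⋆)`-property for a family of groups. -/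
def StarProp (G : ℕ → Type) [∀ n, Group (G n)] : Prop :=
  (∃ N : ℕ, ∀ n, ∃ g : G n, CN N g = Set.univ) ∧
  (∀ k : ℕ, ∃ l : ℕ, ∀ n (g h : G n),
    (l : ℕ∞) ≤ Ng g → (l : ℕ∞) ≤ Ng h → (k : ℕ∞) ≤ Ng (g * h))

/-- The set `Z_𝒰` of sequences whose coordinates need more and more conjugates
to normally generate, along `𝒰`. -/
def ZU (G : ℕ → Type) [∀ n, Group (G n)] (U : Ultrafilter ℕ) : Set (∀ n, G n) :=
  {g | ∀ k : ℕ, {n | (k : ℕ∞) < Ng (g n)} ∈ U}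

/-!
`N(g)` is invariant under inversion and conjugation, and `N(1) = ∞` in a nontrivial group, so
`Z_𝒰` contains every sequence that is `𝒰`-almost `1` and is closed under inverses and conjugation;
closure under products is `(⋆)(2)`. A family of witnesses for `(⋆)(1)` lies outside `Z_𝒰`, so the
quotient is nontrivial. If `g ∉ Z_𝒰`, then `C_k(gₙ, Gₙ) = Gₙ` for `𝒰`-almost all `n` and some
fixed `k`. Given any `h`, for `𝒰`-almost all `n` the element `hₙ` is a product of the same number
`m ≤ k` of conjugates of `gₙ^{±1}`; choosing these factors coordinatewise writes `h` as a product
of `m` sequences, each of which is `𝒰`-almost a conjugate of `g` or of `g⁻¹`. Modulo `Z_𝒰`,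
sequences that agree `𝒰`-almost everywhere are equal, so `[h] ∈ C_k([g])`.
-/

def symmConjugatesOf {H : Type*} [Group H] (g : H) : Set H :=
  conjugatesOf g ∪ conjugatesOf g⁻¹

section ConjugateProducts

variable {H : Type*} [Group H]

lemma CN_eq (N : ℕ) (g : H) : CN N g = ⋃ m ≤ N, symmConjugatesOf g ^ m := rfl

lemma mem_symmConjugatesOf_self (g : H) : g ∈ symmConjugatesOf g :=
  Or.inl (IsConj.refl g)

lemma CN_mono {g : H} {m N : ℕ} (h : m ≤ N) : CN m g ⊆ CN N g :=
  biUnion_subset_biUnion_left fun _ hj => le_trans hj h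

lemma Ng_le_iff {g : H} {k : ℕ} : Ng g ≤ k ↔ CN k g = univ := by
  refine ⟨fun h => ?_, fun h => sInf_le ⟨k, rfl, h⟩⟩
  have hne : {x : ℕ∞ | ∃ m : ℕ, x = m ∧ CN m g = univ}.Nonempty := by
    by_contra he
    simp [Ng, not_nonempty_iff_eq_empty.mp he] at h
  obtain ⟨m, hm, hCN⟩ := csInf_mem hne
  have hmk : m ≤ k := by rw [Ng] at h; exact_mod_cast hm ▸ h
  exact eq_univ_of_univ_subset (hCN ▸ CN_mono hmk)

lemma lt_Ng_iff {g : H} {k : ℕ} : k < Ng g ↔ CN k g ≠ univ := by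
  rw [← not_le, Ng_le_iff]

lemma Ng_inv (g : H) : Ng g⁻¹ = Ng g := by
  have hS : symmConjugatesOf g⁻¹ = symmConjugatesOf g := by
    rw [symmConjugatesOf, symmConjugatesOf, inv_inv, union_comm]
  simp only [Ng, CN_eq, hS]

lemma IsConj.Ng_eq {a b : H} (h : IsConj a b) : Ng a = Ng b := by
  have hinv : IsConj a⁻¹ b⁻¹ := by
    obtain ⟨c, rfl⟩ := isConj_iff.mp h
    exact isConj_iff.mpr ⟨c, conj_inv.symm⟩
  have hS : symmConjugatesOf a = symmConjugatesOf b := by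
    rw [symmConjugatesOf, symmConjugatesOf, isConj_iff_conjugatesOf_eq.mp h,
      isConj_iff_conjugatesOf_eq.mp hinv]
  simp only [Ng, CN_eq, hS]

lemma lt_Ng_one [Nontrivial H] (k : ℕ) : k < Ng (1 : H) := by
  have hS : symmConjugatesOf (1 : H) = 1 := by
    ext x
    simp [symmConjugatesOf, conjugatesOf]
  have hCN : CN k (1 : H) ⊆ 1 := by
    simp only [CN_eq, hS, one_pow, iUnion_subset_iff, subset_refl, implies_true]
  obtain ⟨a, ha⟩ := exists_ne (1 : H)
  exact lt_Ng_iff.mpr fun h => ha (hCN (h ▸ mem_univ a))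

end ConjugateProducts

lemma Filter.Eventually.exists_forall_mem_eventuallyEq {ι : Type*} {α : ι → Type*}
    {l : Filter ι} {A : ∀ i, Set (α i)} {x : ∀ i, α i} (hA : ∀ i, (A i).Nonempty)
    (hx : ∀ᶠ i in l, x i ∈ A i) : ∃ y : ∀ i, α i, (∀ i, y i ∈ A i) ∧ ∀ᶠ i in l, y i = x i := by
  classical
  refine ⟨fun i => if x i ∈ A i then x i else (hA i).some, fun i => ?_, hx.mono fun i hi => ?_⟩
  · by_cases h : x i ∈ A i <;> simp [h, (hA i).some_mem]
  · simp only [if_pos hi]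

lemma Set.univ_pi_pow_subset {ι : Type*} {M : ι → Type*} [∀ i, Monoid (M i)]
    (T : ∀ i, Set (M i)) (m : ℕ) : univ.pi (fun i => T i ^ m) ⊆ univ.pi T ^ m := by
  induction m with
  | zero => exact fun x hx => mem_one.mpr (funext fun i => hx i (mem_univ i))
  | succ m ih =>
    intro x hx
    simp only [mem_univ_pi, pow_succ, Set.mem_mul] at hx
    choose a ha b hb hab using hx
    rw [pow_succ]
    exact ⟨a, ih (mem_univ_pi.mpr ha), b, mem_univ_pi.mpr hb, funext hab⟩

lemma isConj_pi_of_forall {ι : Type*} {G : ι → Type*} [∀ i, Group (G i)] {a b : ∀ i, G i}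
    (h : ∀ i, IsConj (a i) (b i)) : IsConj a b := by
  choose c hc using fun i => isConj_iff.mp (h i)
  exact isConj_iff.mpr ⟨c, funext hc⟩

section Ultraproduct

variable {ι : Type*} {G : ι → Type*} [∀ i, Group (G i)] {U : Ultrafilter ι}
  {Q : Type*} [Group Q] {π : (∀ i, G i) →* Q}

lemma isConj_map_of_eventually (hπ : ∀ a b, (∀ᶠ i in U, a i = b i) → π a = π b)
    {a x : ∀ i, G i} (h : ∀ᶠ i in U, IsConj (a i) (x i)) : IsConj (π a) (π x) := by
  obtain ⟨y, hy, hyx⟩ := h.exists_forall_mem_eventuallyEq (A := fun i => {z | IsConj (a i) z})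
    fun i => ⟨a i, IsConj.refl (a i)⟩
  exact hπ y x hyx ▸ π.map_isConj (isConj_pi_of_forall hy)

lemma map_mem_symmConjugatesOf (hπ : ∀ a b, (∀ᶠ i in U, a i = b i) → π a = π b)
    {g x : ∀ i, G i} (hx : ∀ i, x i ∈ symmConjugatesOf (g i)) :
    π x ∈ symmConjugatesOf (π g) := by
  rcases Ultrafilter.eventually_or.mp (Eventually.of_forall hx) with h | h
  · exact Or.inl (isConj_map_of_eventually hπ h)
  · exact Or.inr (map_inv π g ▸ isConj_map_of_eventually (a := g⁻¹) hπ h)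

lemma map_mem_CN (hπ : ∀ a b, (∀ᶠ i in U, a i = b i) → π a = π b) {k : ℕ}
    {g h : ∀ i, G i} (hh : ∀ᶠ i in U, h i ∈ CN k (g i)) : π h ∈ CN k (π g) := by
  simp only [CN_eq, mem_iUnion₂, exists_prop, ← mem_Iic] at hh
  obtain ⟨m, hmk, hm⟩ := (Ultrafilter.eventually_exists_mem_iff (finite_Iic k)).mp hh
  obtain ⟨y, hy, hyh⟩ := hm.exists_forall_mem_eventuallyEq
    fun i => ⟨g i ^ m, pow_mem_pow (mem_symmConjugatesOf_self (g i))⟩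
  have hπy : π y ∈ symmConjugatesOf (π g) ^ m := by
    have := mem_image_of_mem π (univ_pi_pow_subset _ m (mem_univ_pi.mpr hy))
    rw [image_pow] at this
    exact pow_subset_pow_left (image_subset_iff.mpr fun x hx =>
      map_mem_symmConjugatesOf hπ (mem_univ_pi.mp hx)) this
  rw [CN_eq, ← hπ y h hyh]
  exact mem_iUnion₂.mpr ⟨m, hmk, hπy⟩

end Ultraproduct

section ZU

variable {G : ℕ → Type} [∀ n, Group (G n)] {U : Ultrafilter ℕ}

lemma mem_ZU_of_eventually_eq_one [∀ n, Nontrivial (G n)] {z : ∀ n, G n}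
    (hz : ∀ᶠ n in U, z n = 1) : z ∈ ZU G U := fun k =>
  hz.mono fun n hn => show (k : ℕ∞) < Ng (z n) from hn ▸ lt_Ng_one k

lemma mul_mem_ZU (hstar : StarProp G) {g h : ∀ n, G n} (hg : g ∈ ZU G U) (hh : h ∈ ZU G U) :
    g * h ∈ ZU G U := by
  intro k
  obtain ⟨l, hl⟩ := hstar.2 (k + 1)
  filter_upwards [hg l, hh l] with n hgn hhn
  calc (k : ℕ∞) < (k + 1 : ℕ) := by exact_mod_cast k.lt_succ_self
    _ ≤ Ng (g n * h n) := hl n _ _ hgn.le hhn.le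

lemma inv_mem_ZU {g : ∀ n, G n} (hg : g ∈ ZU G U) : g⁻¹ ∈ ZU G U :=
  fun k => by simpa only [Pi.inv_apply, Ng_inv] using hg k

lemma conj_mem_ZU (t : ∀ n, G n) {g : ∀ n, G n} (hg : g ∈ ZU G U) : t * g * t⁻¹ ∈ ZU G U := by
  intro k
  filter_upwards [hg k] with n hn
  rwa [show (t * g * t⁻¹) n = t n * g n * (t n)⁻¹ from rfl,
    ← (isConj_iff.mpr ⟨t n, rfl⟩ : IsConj (g n) _).Ng_eq]

variable (U) in
def ZUSubgroup [∀ n, Nontrivial (G n)] (hstar : StarProp G) : Subgroup (∀ n, G n) where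
  carrier := ZU G U
  mul_mem' := mul_mem_ZU hstar
  one_mem' := mem_ZU_of_eventually_eq_one (Eventually.of_forall fun _ => rfl)
  inv_mem' := inv_mem_ZU

instance [∀ n, Nontrivial (G n)] (hstar : StarProp G) : (ZUSubgroup U hstar).Normal :=
  ⟨fun _ hg t => conj_mem_ZU t hg⟩

lemma QuotientGroup.mk_eq_of_eventuallyEq_ZU [∀ n, Nontrivial (G n)] {Z : Subgroup (∀ n, G n)}
    (hZ : (Z : Set (∀ n, G n)) = ZU G U) {a b : ∀ n, G n} (hab : ∀ᶠ n in U, a n = b n) :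
    (a : (∀ n, G n) ⧸ Z) = b := by
  refine QuotientGroup.eq.mpr (SetLike.mem_coe.mp (hZ ▸ mem_ZU_of_eventually_eq_one ?_))
  filter_upwards [hab] with n hn
  simp [hn]

lemma notMem_ZU_of_forall_CN_eq_univ {N : ℕ} {g : ∀ n, G n}
    (hg : ∀ n, CN N (g n) = univ) : g ∉ ZU G U := fun hZ =>
  U.empty_notMem (by simpa [lt_Ng_iff, hg] using hZ N)

lemma eventually_CN_eq_univ_of_notMem_ZU {g : ∀ n, G n} (hg : g ∉ ZU G U) :
    ∃ k : ℕ, ∀ᶠ n in U, CN k (g n) = univ := by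
  obtain ⟨k, hk⟩ := not_forall.mp hg
  refine ⟨k, ?_⟩
  simpa [lt_Ng_iff] using (U.eventually_not (p := fun n => (k : ℕ∞) < Ng (g n))).mpr hk

end ZU

theorem statement15_general (G : ℕ → Type) [∀ n, Group (G n)]
    (hnt : ∀ n, Nontrivial (G n)) (hstar : StarProp G)
    (U : Ultrafilter ℕ) :
    (∃ Z : Subgroup (∀ n, G n), (Z : Set (∀ n, G n)) = ZU G U) ∧
    (∀ Z : Subgroup (∀ n, G n), (Z : Set (∀ n, G n)) = ZU G U → Z.Normal) ∧
    (∀ Z : Subgroup (∀ n, G n), (Z : Set (∀ n, G n)) = ZU G U → ∀ [Z.Normal],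
      Nontrivial ((∀ n, G n) ⧸ Z) ∧
      ∀ x : (∀ n, G n) ⧸ Z, x ≠ 1 → ∃ N : ℕ, CN N x = Set.univ) := by
  have := hnt
  refine ⟨⟨ZUSubgroup U hstar, rfl⟩, fun Z hZ => ?_, fun Z hZ _ => ⟨?_, fun x hx => ?_⟩⟩
  · obtain rfl : Z = ZUSubgroup U hstar := SetLike.coe_injective hZ
    infer_instance
  · obtain ⟨N, hN⟩ := hstar.1
    choose g hg using hN
    refine ⟨g, 1, fun h1 => notMem_ZU_of_forall_CN_eq_univ (U := U) hg ?_⟩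
    exact hZ ▸ (QuotientGroup.eq_one_iff g).mp h1
  · obtain ⟨g, rfl⟩ := QuotientGroup.mk_surjective x
    obtain ⟨k, hk⟩ := eventually_CN_eq_univ_of_notMem_ZU (U := U)
      fun hg => hx ((QuotientGroup.eq_one_iff g).mpr (SetLike.mem_coe.mp (hZ ▸ hg)))
    refine ⟨k, eq_univ_of_forall fun y => ?_⟩
    obtain ⟨h, rfl⟩ := QuotientGroup.mk_surjective y
    exact map_mem_CN (π := QuotientGroup.mk' Z)
      (fun _ _ hab => QuotientGroup.mk_eq_of_eventuallyEq_ZU hZ hab)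
      (hk.mono fun n hn => hn ▸ mem_univ (h n))

/-- For a family of nontrivial groups with the `(⋆)`-property and a
nonprincipal ultrafilter `𝒰`, the set `Z_𝒰` is (the carrier of) a normal subgroup of
`∏_n G_n`, and the quotient `(∏_n G_n)/Z_𝒰` is a nontrivial boundedly simple group. -/
theorem statement15 (G : ℕ → Type) [∀ n, Group (G n)]
    (hnt : ∀ n, Nontrivial (G n)) (hstar : StarProp G)
    (U : Ultrafilter ℕ) (hU : (U : Filter ℕ) ≤ Filter.cofinite) :
    (∃ Z : Subgroup (∀ n, G n), (Z : Set (∀ n, G n)) = ZU G U) ∧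
    (∀ Z : Subgroup (∀ n, G n), (Z : Set (∀ n, G n)) = ZU G U → Z.Normal) ∧
    (∀ Z : Subgroup (∀ n, G n), (Z : Set (∀ n, G n)) = ZU G U → ∀ [Z.Normal],
      Nontrivial ((∀ n, G n) ⧸ Z) ∧
      ∀ x : (∀ n, G n) ⧸ Z, x ≠ 1 → ∃ N : ℕ, CN N x = Set.univ) :=
  statement15_general G hnt hstar U
end
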